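/- arXiv:1904.12525 — 10 statements merged into one kernel-verified Lean document; each statement's English description precedes it below -/
import Mathlib

section
/- Let f : X → Y be a map between uniform spaces (X, 𝒰) and (Y, 𝒱). Then f is proximally continuous if and only if for every subset A ⊆ X and every entourage V ∈ 𝒱 there exists an entourage U ∈ 𝒰 such that f(U[A]) ⊆ V[f(A)]. -/
/-- A function `f : X → Y` between uniform spaces is *proximally continuous* if for every
bounded uniformly continuous function `g : Y → ℝ`, the composition `g ∘ f` is uniformly
continuous. -/
def ProximallyContinuous {X Y : Type*} [UniformSpace X] [UniformSpace Y] (f : X → Y) : Prop :=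
  ∀ g : Y → ℝ, UniformContinuous g → (∃ C, ∀ y, |g y| ≤ C) → UniformContinuous (g ∘ f)

/-!
Given `A ⊆ X` and an entourage `V` of `Y`, the entourages `V ⊇ W₀ ⊇ W₁ ⊇ ⋯` with
`Wₙ₊₁ ○ Wₙ₊₁ ⊆ Wₙ` generate a coarser, countably generated, hence pseudometrizable uniformity
on `Y`, with a pseudometric `d` whose `ε`-ball entourage lies in `V`. The bounded uniformly
continuous function `min ε (d(·, f(A)))` vanishes on `f(A)` and is `≥ ε` off `V[f(A)]`, so
proximal continuity of `f` yields the entourage `U`.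

Conversely, a bounded `g` takes values in finitely many balls `B(c, ε/3)`. Applying the
hypothesis to each level set `A_c = (g ∘ f)⁻¹ B(c, ε/3)` and to `V = {d(g a, g b) < ε/3}`, and
intersecting the resulting entourages, every `U`-close pair `(x, y)` with `x ∈ A_c` has
`g (f y)` within `ε/3` of some `g (f x')`, `x' ∈ A_c`, so `g (f x)` and `g (f y)` are within `ε`.
-/

open Filter Set Uniformity Metric Function
open scoped SetRel

universe u

section Pseudometrization

variable {α : Type u} [uα : UniformSpace α]

theorem exists_symm_seq_comp_subset_of_mem_uniformity {V : SetRel α α} (hV : V ∈ 𝓤 α) :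
    ∃ W : ℕ → SetRel α α, (∀ n, W n ∈ 𝓤 α) ∧ (∀ n, (W n).IsSymm) ∧
      (∀ n, W (n + 1) ○ W (n + 1) ⊆ W n) ∧ W 0 ⊆ V := by
  choose! half half_mem half_symm half_comp using
    fun s (hs : s ∈ 𝓤 α) => comp_symm_mem_uniformity_sets hs
  have iterate_mem : ∀ n, half^[n] V ∈ 𝓤 α := fun n => by
    induction n with
    | zero => exact hV
    | succ n ih => rw [iterate_succ_apply']; exact half_mem _ ih
  refine ⟨fun n => half^[n + 1] V, fun n => iterate_mem (n + 1), fun n => ?_, fun n => ?_, ?_⟩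
  · simp only [iterate_succ_apply']
    exact half_symm _ (iterate_mem n)
  · simp only [iterate_succ_apply' half (n + 1)]
    exact half_comp _ (iterate_mem (n + 1))
  · exact (subset_comp_self_of_mem_uniformity (half_mem V hV)).trans (half_comp V hV)

theorem exists_countablyGenerated_coarser_uniformity {V : SetRel α α} (hV : V ∈ 𝓤 α) :
    ∃ v : UniformSpace α, IsCountablyGenerated 𝓤[v] ∧ uα ≤ v ∧ V ∈ 𝓤[v] := by
  obtain ⟨W, hW, hsymm, hcomp, hWV⟩ := exists_symm_seq_comp_subset_of_mem_uniformity hV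
  have hanti : Antitone W := antitone_nat_of_succ_le fun n =>
    (subset_comp_self_of_mem_uniformity (hW (n + 1))).trans (hcomp n)
  have hbasis : (⨅ n, 𝓟 (W n)).HasBasis (fun _ => True) W :=
    hasBasis_iInf_principal hanti.directed_ge
  let v : UniformSpace α := .ofCore <| .mk' (⨅ n, 𝓟 (W n))
    (fun _ hr a => by
      obtain ⟨n, -, hn⟩ := hbasis.mem_iff.1 hr
      exact hn (refl_mem_uniformity (hW n)))
    (fun _ hr => by
      obtain ⟨n, -, hn⟩ := hbasis.mem_iff.1 hr
      exact mem_of_superset (hbasis.mem_of_mem (i := n) trivial)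
        fun p hp => hn ((hsymm n).symm _ _ hp))
    (fun _ hr => by
      obtain ⟨n, -, hn⟩ := hbasis.mem_iff.1 hr
      exact ⟨W (n + 1), hbasis.mem_of_mem trivial, (hcomp n).trans hn⟩)
  refine ⟨v, ?_, UniformSpace.le_def.2 (le_iInf fun n => le_principal_iff.2 (hW n)), ?_⟩
  · change IsCountablyGenerated (⨅ n, 𝓟 (W n))
    infer_instance
  · exact mem_of_superset (hbasis.mem_of_mem (i := 0) trivial) hWV

theorem exists_uniformContinuous_pseudoMetricSpace {V : SetRel α α} (hV : V ∈ 𝓤 α) :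
    ∃ (P : Type u) (_ : PseudoMetricSpace P) (φ : α → P), UniformContinuous φ ∧
      ∃ ε > 0, ∀ a b, dist (φ a) (φ b) < ε → (a, b) ∈ V := by
  obtain ⟨v, hcg, hle, hVv⟩ := exists_countablyGenerated_coarser_uniformity hV
  obtain ⟨m, hm⟩ := @UniformSpace.metrizable_uniformity α v hcg
  obtain ⟨ε, hε, hball⟩ := (@mem_uniformity_dist α m V).1 (by rwa [hm])
  refine ⟨α, m, id, ?_, ε, hε, fun a b h => hball h⟩
  change Tendsto id 𝓤[uα] 𝓤[m.toUniformSpace]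
  rw [hm]
  exact UniformSpace.le_def.1 hle

end Pseudometrization

section

variable {X Y : Type*} [UniformSpace X] [UniformSpace Y] {f : X → Y}

theorem ProximallyContinuous.exists_entourage_image_subset (hf : ProximallyContinuous f)
    (A : Set X) {V : SetRel Y Y} (hV : V ∈ 𝓤 Y) :
    ∃ U ∈ 𝓤 X, f '' {y | ∃ x ∈ A, (x, y) ∈ U} ⊆ {z | ∃ w ∈ f '' A, (w, z) ∈ V} := by
  rcases A.eq_empty_or_nonempty with rfl | hA
  · exact ⟨univ, univ_mem, by simp⟩
  obtain ⟨P, _, φ, hφ, ε, hε, hV⟩ := exists_uniformContinuous_pseudoMetricSpace hV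
  set g : Y → ℝ := fun z => min ε (infDist (φ z) ((φ ∘ f) '' A))
  have hg : UniformContinuous g :=
    ((lipschitz_infDist_pt _).const_min ε).uniformContinuous.comp hφ
  have hg_nonneg : ∀ z, 0 ≤ g z := fun z => le_min hε.le infDist_nonneg
  have hg_bdd : ∃ C, ∀ z, |g z| ≤ C :=
    ⟨ε, fun z => (abs_of_nonneg (hg_nonneg z)).trans_le (min_le_left _ _)⟩
  refine ⟨_, hf g hg hg_bdd (dist_mem_uniformity hε), ?_⟩
  rintro _ ⟨y, ⟨x, hx, hxy⟩, rfl⟩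
  have hgx : g (f x) = 0 := by
    have hfx : φ (f x) ∈ (φ ∘ f) '' A := mem_image_of_mem (φ ∘ f) hx
    simp only [g, infDist_zero_of_mem hfx, min_eq_right hε.le]
  have hgy : g (f y) < ε := by
    simpa [hgx, Real.dist_eq, abs_of_nonneg (hg_nonneg _)] using hxy
  have hdist : infDist (φ (f y)) ((φ ∘ f) '' A) < ε := by
    simpa [g, min_lt_iff] using hgy
  obtain ⟨_, ⟨x', hx', rfl⟩, hx'y⟩ := (infDist_lt_iff (hA.image _)).1 hdist
  exact ⟨f x', mem_image_of_mem f hx', hV _ _ (by rwa [dist_comm])⟩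

theorem uniformContinuous_comp_of_totallyBounded_range
    (hf : ∀ A : Set X, ∀ V ∈ 𝓤 Y, ∃ U ∈ 𝓤 X,
      f '' {y | ∃ x ∈ A, (x, y) ∈ U} ⊆ {z | ∃ w ∈ f '' A, (w, z) ∈ V})
    {M : Type*} [PseudoMetricSpace M] {g : Y → M} (hg : UniformContinuous g)
    (hbdd : TotallyBounded (range g)) : UniformContinuous (g ∘ f) := by
  refine uniformity_basis_dist.tendsto_right_iff.2 fun ε hε => ?_
  obtain ⟨t, ht, hcover⟩ := totallyBounded_iff.1 hbdd (ε / 3) (by positivity)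
  have hlevel : ∀ c ∈ t, ∀ᶠ p in 𝓤 X, dist (g (f p.1)) c < ε / 3 →
      ∃ x, dist (g (f x)) c < ε / 3 ∧ dist (g (f x)) (g (f p.2)) < ε / 3 := by
    intro c _
    obtain ⟨U, hU, hsub⟩ := hf {x | dist (g (f x)) c < ε / 3} _
      (hg (dist_mem_uniformity (ε := ε / 3) (by positivity)))
    filter_upwards [hU] with p hp hpc
    obtain ⟨_, ⟨x, hxc, rfl⟩, hxp⟩ := hsub ⟨p.2, ⟨p.1, hpc, hp⟩, rfl⟩
    exact ⟨x, hxc, hxp⟩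
  filter_upwards [(eventually_all_finite ht).2 hlevel] with p hp
  obtain ⟨c, hc, hpc⟩ := mem_iUnion₂.1 (hcover (mem_range_self (f p.1)))
  obtain ⟨x, hxc, hxp⟩ := hp c hc hpc
  calc dist (g (f p.1)) (g (f p.2))
      ≤ dist (g (f p.1)) c + dist c (g (f x)) + dist (g (f x)) (g (f p.2)) := dist_triangle4 ..
    _ < ε / 3 + ε / 3 + ε / 3 := by
      rw [dist_comm c]
      gcongr
      exact hpc
    _ = ε := by ring

end

/-- Proposition 2.1: `f` is proximally continuous iff for every `A ⊆ X` and every entourage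
`V` of `Y` there is an entourage `U` of `X` with `f(U[A]) ⊆ V[f(A)]`. -/
theorem stmt_0 {X Y : Type*} [UniformSpace X] [UniformSpace Y] (f : X → Y) :
    ProximallyContinuous f ↔
      ∀ A : Set X, ∀ V ∈ uniformity Y, ∃ U ∈ uniformity X,
        f '' {y | ∃ x ∈ A, (x, y) ∈ U} ⊆ {z | ∃ w ∈ f '' A, (w, z) ∈ V} := by
  refine ⟨fun hf A V hV => hf.exists_entourage_image_subset A hV, fun hf g hg ⟨C, hC⟩ => ?_⟩
  have hrange : range g ⊆ Icc (-C) C := range_subset_iff.2 fun y => abs_le.1 (hC y)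
  exact uniformContinuous_comp_of_totallyBounded_range hf hg
    ((totallyBounded_Icc _ _).subset hrange)
end

section
/- Let X be a set and W a symmetric binary relation on X (i.e., (x, y) ∈ W implies (y, x) ∈ W). Then for every infinite cardinal η and every family (x_n, y_n)_{n<η} of pairs in X × X such that (x_n, y_n) ∉ W∘W∘W for each n < η, there exists a subset A ⊆ η which is cofinal in η and such that (x_n, y_m) ∉ W for every n, m ∈ A. -/
/-!
If some row `{m | (x n₀, y m) ∈ W}` is cofinal, it is the required set: `x m ~ y m' ~ x n₀ ~ y m`
would be a `W ∘ W ∘ W`-path from `x m` to `y m`. Columns are handled in the same way. Otherwise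
every row and column is bounded below `η.ord`, and a recursion along a cofinal sequence of length
`cof η.ord` chooses indices each lying beyond the bounds of all earlier ones; since fewer than
`cof η.ord` bounds are involved at each stage, their supremum stays below `η.ord`.
-/

open Set
open scoped SetRel

namespace Ordinal

universe u

theorem iSup_Iio_lt_of_lt_ord_cof {o i : Ordinal.{u}} (hi : i < o.cof.ord) {f : Iio i → Ordinal.{u}}
    (hf : ∀ j, f j < o) : ⨆ j, f j < o := by
  refine lift_iSup_lt_of_lt_cof ?_ hf
  rw [Cardinal.mk_Iio_ordinal, Cardinal.lift_lift, ← lift_cof, Cardinal.lift_lt]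
  exact Cardinal.lt_ord.mp hi

theorem exists_cofinal_sparse (o : Ordinal) (B : Ordinal → Ordinal) (hB : ∀ n < o, B n < o) :
    ∃ A : Set Ordinal, (∀ n ∈ A, n < o) ∧ (∀ β < o, ∃ α ∈ A, β ≤ α) ∧
      ∀ n ∈ A, ∀ m ∈ A, n < m → B n ≤ m := by
  obtain ⟨f, hf⟩ := exists_isFundamentalSeq (o := o) rfl
  let g : Ordinal → Ordinal := fun i ↦ if h : i < o.cof.ord then f ⟨i, h⟩ else 0
  let F : Ordinal → Ordinal :=
    lt_wf.fix fun i F ↦ max (g i) (⨆ j : Iio i, max (F j j.2) (B (F j j.2)))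
  have hF : ∀ i, F i = max (g i) (⨆ j : Iio i, max (F j) (B (F j))) := lt_wf.fix_eq _
  have hF_le : ∀ {i j}, i < j → max (F i) (B (F i)) ≤ F j := fun {i j} hij ↦ by
    rw [hF j]
    exact (Ordinal.le_iSup (fun k : Iio j ↦ max (F k) (B (F k))) ⟨i, hij⟩).trans (le_max_right _ _)
  have hF_mono : Monotone F := fun i j hij ↦
    hij.eq_or_lt.elim (fun h ↦ h ▸ le_rfl) fun h ↦ (le_max_left _ _).trans (hF_le h)
  have hF_lt : ∀ i < o.cof.ord, F i < o := fun i ↦ by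
    induction i using WellFoundedLT.induction with
    | _ i IH =>
      intro hi
      rw [hF i]
      refine max_lt ((dif_pos hi).trans_lt (f _).2) (iSup_Iio_lt_of_lt_ord_cof hi fun j ↦ ?_)
      have hFj := IH j j.2 (j.2.trans hi)
      exact max_lt hFj (hB _ hFj)
  refine ⟨F '' Iio o.cof.ord, ?_, ?_, ?_⟩
  · rintro _ ⟨i, hi, rfl⟩
    exact hF_lt i hi
  · intro β hβ
    obtain ⟨_, ⟨i, rfl⟩, hi⟩ := hf.isCofinal_range ⟨β, hβ⟩
    refine ⟨F i, mem_image_of_mem F i.2, (Subtype.coe_le_coe.mpr hi).trans ?_⟩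
    rw [hF i]
    exact le_max_of_le_left (by simp [g, mem_Iio.mp i.2])
  · rintro _ ⟨i, -, rfl⟩ _ ⟨j, -, rfl⟩ hFij
    exact (le_max_right _ _).trans (hF_le (hF_mono.reflect_lt hFij))

end Ordinal

section SymmetricRelation

variable {X : Type*} {W : Set (X × X)} {a b c d : X}

theorem notMem_of_notMem_comp_comp_of_mem_left (hsymm : ∀ p ∈ W, (p.2, p.1) ∈ W)
    (h : (b, d) ∉ W ○ (W ○ W)) (had : (a, d) ∈ W) (hac : (a, c) ∈ W) : (b, c) ∉ W :=
  fun hbc ↦ h ⟨c, hbc, a, hsymm _ hac, had⟩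

theorem notMem_of_notMem_comp_comp_of_mem_right (hsymm : ∀ p ∈ W, (p.2, p.1) ∈ W)
    (h : (b, d) ∉ W ○ (W ○ W)) (hba : (b, a) ∈ W) (hca : (c, a) ∈ W) : (c, d) ∉ W :=
  fun hcd ↦ h ⟨a, hba, c, hsymm _ hca, hcd⟩

theorem exists_cofinal_notMem_of_bounded (hsymm : ∀ p ∈ W, (p.2, p.1) ∈ W) (o : Ordinal)
    (x y : Ordinal → X) (h : ∀ n < o, (x n, y n) ∉ W ○ (W ○ W))
    (hbound : ∀ n < o, ∃ β < o, ∀ m < o, β ≤ m → (x n, y m) ∉ W ∧ (x m, y n) ∉ W) :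
    ∃ A : Set Ordinal, (∀ n ∈ A, n < o) ∧ (∀ β < o, ∃ α ∈ A, β ≤ α) ∧
      ∀ n ∈ A, ∀ m ∈ A, (x n, y m) ∉ W := by
  choose! B hB_lt hB using hbound
  obtain ⟨A, hA_lt, hA_cof, hA_sparse⟩ := Ordinal.exists_cofinal_sparse o B hB_lt
  refine ⟨A, hA_lt, hA_cof, fun n hn m hm ↦ ?_⟩
  rcases lt_trichotomy n m with hnm | rfl | hmn
  · exact (hB n (hA_lt n hn) m (hA_lt m hm) (hA_sparse n hn m hm hnm)).1
  · exact fun hW ↦ h n (hA_lt n hn) ⟨_, hW, _, hsymm _ hW, hW⟩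
  · exact (hB m (hA_lt m hm) n (hA_lt n hn) (hA_sparse m hm n hn hmn)).2

end SymmetricRelation

theorem stmt_2_general {X : Type*} (W : Set (X × X)) (hsymm : ∀ p ∈ W, (p.2, p.1) ∈ W)
    (η : Cardinal) (x y : Ordinal → X)
    (h : ∀ n < η.ord, (x n, y n) ∉ SetRel.comp W (SetRel.comp W W)) :
    ∃ A : Set Ordinal, (∀ n ∈ A, n < η.ord) ∧ (∀ β < η.ord, ∃ α ∈ A, β ≤ α) ∧
      ∀ n ∈ A, ∀ m ∈ A, (x n, y m) ∉ W := by
  by_cases hrow : ∃ n₀ < η.ord, ∀ β < η.ord, ∃ m < η.ord, β ≤ m ∧ (x n₀, y m) ∈ W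
  · obtain ⟨n₀, -, hcof⟩ := hrow
    refine ⟨{m | m < η.ord ∧ (x n₀, y m) ∈ W}, fun n hn ↦ hn.1, fun β hβ ↦ ?_, ?_⟩
    · obtain ⟨m, hm, hβm, hW⟩ := hcof β hβ
      exact ⟨m, ⟨hm, hW⟩, hβm⟩
    · rintro n ⟨hn, hWn⟩ m ⟨-, hWm⟩
      exact notMem_of_notMem_comp_comp_of_mem_left hsymm (h n hn) hWn hWm
  by_cases hcol : ∃ n₀ < η.ord, ∀ β < η.ord, ∃ m < η.ord, β ≤ m ∧ (x m, y n₀) ∈ W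
  · obtain ⟨n₀, -, hcof⟩ := hcol
    refine ⟨{m | m < η.ord ∧ (x m, y n₀) ∈ W}, fun n hn ↦ hn.1, fun β hβ ↦ ?_, ?_⟩
    · obtain ⟨m, hm, hβm, hW⟩ := hcof β hβ
      exact ⟨m, ⟨hm, hW⟩, hβm⟩
    · rintro n ⟨-, hWn⟩ m ⟨hm, hWm⟩
      exact notMem_of_notMem_comp_comp_of_mem_right hsymm (h m hm) hWm hWn
  push Not at hrow hcol
  refine exists_cofinal_notMem_of_bounded hsymm η.ord x y h fun n hn ↦ ?_
  obtain ⟨β₁, hβ₁, hn_row⟩ := hrow n hn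
  obtain ⟨β₂, hβ₂, hn_col⟩ := hcol n hn
  exact ⟨max β₁ β₂, max_lt hβ₁ hβ₂, fun m hm hβm ↦
    ⟨hn_row m hm (le_of_max_le_left hβm), hn_col m hm (le_of_max_le_right hβm)⟩⟩

/-- Lemma 2.3: if `W` is a symmetric binary relation on `X`, `η` an infinite cardinal and
`(x n, y n)_{n < η.ord}` a family of pairs with `(x n, y n) ∉ W ∘ W ∘ W`, then there is a
subset `A` of the ordinals below `η` which is cofinal in `η` and such that `(x n, y m) ∉ W`
for all `n, m ∈ A`. -/
theorem stmt_2 {X : Type*} (W : Set (X × X)) (hsymm : ∀ p ∈ W, (p.2, p.1) ∈ W)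
    (η : Cardinal) (hη : Cardinal.aleph0 ≤ η) (x y : Ordinal → X)
    (h : ∀ n < η.ord, (x n, y n) ∉ SetRel.comp W (SetRel.comp W W)) :
    ∃ A : Set Ordinal, (∀ n ∈ A, n < η.ord) ∧ (∀ β < η.ord, ∃ α ∈ A, β ≤ α) ∧
      ∀ n ∈ A, ∀ m ∈ A, (x n, y m) ∉ W :=
  stmt_2_general W hsymm η x y h
end

section
/- Let G be a topological group which is functionally generated by the collection of all sets of the form closure(A), where A ⊆ G is a subset such that A·A⁻¹ is relatively o-radial in G. Then G is proximally fine with respect to its right uniformity. -/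
open Pointwise

universe u v

/-- Right uniform continuity of `f : G → Y`: a basis of the right uniformity of a topological
group `G` is given by the sets `{(g, h) : g * h⁻¹ ∈ U}`, `U` a neighborhood of the identity. -/
def RightUC {G : Type*} [Group G] (t : TopologicalSpace G) {Y : Type*} [UniformSpace Y]
    (f : G → Y) : Prop :=
  ∀ V ∈ uniformity Y, ∃ U ∈ @nhds G t 1, ∀ g h : G, g * h⁻¹ ∈ U → (f g, f h) ∈ V

/-- Left uniform continuity of `f : G → Y`: a basis of the left uniformity of a topological
group `G` is given by the sets `{(g, h) : g⁻¹ * h ∈ U}`, `U` a neighborhood of the identity. -/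
def LeftUC {G : Type*} [Group G] (t : TopologicalSpace G) {Y : Type*} [UniformSpace Y]
    (f : G → Y) : Prop :=
  ∀ V ∈ uniformity Y, ∃ U ∈ @nhds G t 1, ∀ g h : G, g⁻¹ * h ∈ U → (f g, f h) ∈ V

/-- `f : G → Y` is proximally continuous for the right uniformity of `G`: for every bounded
uniformly continuous `φ : Y → ℝ`, the composition `φ ∘ f` is right uniformly continuous. -/
def RightProxCont {G : Type*} [Group G] (t : TopologicalSpace G) {Y : Type*} [UniformSpace Y]
    (f : G → Y) : Prop :=
  ∀ φ : Y → ℝ, UniformContinuous φ → (∃ C, ∀ y, |φ y| ≤ C) → RightUC t (φ ∘ f)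

/-- A topological group is proximally fine with respect to its right uniformity if every
proximally continuous map into any uniform space is uniformly continuous. -/
def ProxFineGroup {G : Type*} [Group G] (t : TopologicalSpace G) : Prop :=
  ∀ (Y : Type v) [UniformSpace Y] (f : G → Y), RightProxCont t f → RightUC t f

/-- A subset `A` of a topological space `X` is relatively o-radial in `X` if for every family
`(O i)` of open sets and every `a ∈ A` with `a ∈ closure (⋃ i, O i ∩ A)` and `a ∉ closure (O i)`
for all `i`, there is `J ⊆ I` of regular cardinality such that `a ∈ closure (⋃ j ∈ L, O j)`
for every `L ⊆ J` of the same cardinality as `J`. -/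
def RelORadial {X : Type u} [TopologicalSpace X] (A : Set X) : Prop :=
  ∀ {ι : Type u} (O : ι → Set X) (a : X), a ∈ A → (∀ i, IsOpen (O i)) →
    a ∈ closure (⋃ i, O i ∩ A) → (∀ i, a ∉ closure (O i)) →
    ∃ J : Set ι, (Cardinal.mk J).IsRegular ∧
      ∀ L : Set ι, L ⊆ J → Cardinal.mk L = Cardinal.mk J → a ∈ closure (⋃ j ∈ L, O j)

/-- `X` is functionally generated by the collection `M` of subsets of `X` if every
discontinuous real-valued function on `X` restricts on some `A ∈ M` to a function with no
continuous extension to `X`. -/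
def FunGen (X : Type*) [TopologicalSpace X] (M : Set (Set X)) : Prop :=
  ∀ f : X → ℝ, ¬Continuous f →
    ∃ A ∈ M, ¬∃ g : X → ℝ, Continuous g ∧ ∀ a ∈ A, g a = f a

/-!
Suppose `f : G → Y` is proximally continuous but not right uniformly continuous, as witnessed by an
entourage `V`, and take a bounded uniformly continuous pseudometric `d` on `Y` whose small balls lie
in `V`. The displacement `D x = ⨆ t, d (f (x * t)) (f t)` is lower semicontinuous, vanishes at `1`,
satisfies `|D g - D h| ≤ D (g * h⁻¹)`, and is bounded away from `0` at points arbitrarily close to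
`1`; so it is discontinuous, and functional generation gives `A` with `A * A⁻¹` relatively o-radial
such that `D` restricted to `closure A` has no continuous extension.

Yet `D` is small near `1` on `closure (A * A⁻¹)`: otherwise o-radiality at `1` produces a family
of regular size `κ` of translates witnessing large displacement, every subfamily of size `κ` of which
accumulates at `1`. A free-set argument for regular cardinals yields a bounded `d`-Lipschitz
`φ : Y → ℝ` separating `κ` of the witnessing pairs, contradicting the right uniform continuity of
`φ ∘ f`. Hence `D` is right uniformly continuous on `closure A`, so it is Lipschitz there for a
right uniformly continuous pseudometric on `G` and extends continuously by McShane's construction.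
-/

open Set Filter Topology Uniformity NNReal Cardinal

namespace PseudoMetric

variable {X : Type*}

abbrev toPseudoMetricSpace (d : PseudoMetric X ℝ) : PseudoMetricSpace X where
  dist := d
  dist_self := d.refl
  dist_comm := d.symm
  dist_triangle := d.triangle

theorem abs_sub_le (d : PseudoMetric X ℝ) (x y z : X) : |d x z - d y z| ≤ d x y :=
  let := d.toPseudoMetricSpace
  abs_dist_sub_le x y z

theorem exists_extension {d : PseudoMetric X ℝ} {K : ℝ≥0} {S : Set X} {F : X → ℝ}
    (hF : ∀ x ∈ S, ∀ y ∈ S, |F x - F y| ≤ K * d x y) :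
    ∃ F' : X → ℝ, (∀ x y, |F' x - F' y| ≤ K * d x y) ∧ EqOn F' F S := by
  let := d.toPseudoMetricSpace
  obtain ⟨F', hF', hEq⟩ := (LipschitzOnWith.of_dist_le_mul hF).extend_real
  exact ⟨F', hF'.dist_le_mul, hEq.symm⟩

theorem exists_of_chain (W : ℕ → Set (X × X)) (hrefl : ∀ n x, (x, x) ∈ W n)
    (hsymm : ∀ n x y, (x, y) ∈ W n → (y, x) ∈ W n)
    (hcomp : ∀ n x y z w, (x, y) ∈ W (n + 1) → (y, z) ∈ W (n + 1) → (z, w) ∈ W (n + 1) →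
      (x, w) ∈ W n) :
    ∃ d : PseudoMetric X ℝ, (∀ n x y, (x, y) ∈ W n → d x y ≤ 2⁻¹ ^ n) ∧
      ∀ n x y, d x y < 2⁻¹ ^ (n + 1) → (x, y) ∈ W n := by
  classical
  have hanti : Antitone W := antitone_nat_of_succ_le fun n p hp =>
    hcomp n _ _ _ _ hp (hrefl _ _) (hrefl _ _)
  -- As in `UniformSpace.metrizable_uniformity`: `d₀` is within a factor `2` of the largest
  -- pseudometric below it, thanks to the triple composition property.
  let d₀ : X → X → ℝ≥0 := fun x y => if h : ∃ n, (x, y) ∉ W n then 2⁻¹ ^ Nat.find h else 0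
  have hr : (2⁻¹ : ℝ≥0) ∈ Ioo 0 1 := ⟨by norm_num, by norm_num⟩
  have hle_d₀ : ∀ {x y n}, 2⁻¹ ^ n ≤ d₀ x y ↔ (x, y) ∉ W n := by
    intro x y n
    dsimp only [d₀]
    split_ifs with h
    · rw [(pow_right_strictAnti₀ hr.1 hr.2).le_iff_ge, Nat.find_le_iff]
      exact ⟨fun ⟨m, hmn, hm⟩ hn => hm (hanti hmn hn), fun h => ⟨n, le_rfl, h⟩⟩
    · push Not at h
      simp only [h, not_true, (pow_pos hr.1 _).not_ge]
  have hself : ∀ x, d₀ x x = 0 := fun x => dif_neg (by simpa using fun n => hrefl n x)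
  have hcomm : ∀ x y, d₀ x y = d₀ y x := fun x y => by
    simp only [d₀, fun n => show (x, y) ∈ W n ↔ (y, x) ∈ W n from ⟨hsymm n x y, hsymm n y x⟩]
  let := PseudoMetricSpace.ofPreNNDist d₀ hself hcomm
  have hdist_le : ∀ x y, dist x y ≤ d₀ x y := PseudoMetricSpace.dist_ofPreNNDist_le _ _ _
  have hle_dist : ∀ x y, (d₀ x y : ℝ) ≤ 2 * dist x y := by
    refine PseudoMetricSpace.le_two_mul_dist_ofPreNNDist _ _ _ fun x₁ x₂ x₃ x₄ => ?_
    by_cases H : ∃ n, (x₁, x₄) ∉ W n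
    · refine (dif_pos H).trans_le ?_
      rw [← div_le_iff₀' zero_lt_two, div_eq_mul_inv, mul_comm, ← pow_succ']
      simp only [le_max_iff, hle_d₀, ← not_and_or]
      rintro ⟨h₁₂, h₂₃, h₃₄⟩
      exact Nat.find_spec H (hcomp _ _ _ _ _ h₁₂ h₂₃ h₃₄)
    · exact (dif_neg H).trans_le zero_le
  have hcast : ∀ n : ℕ, ((2⁻¹ : ℝ≥0) ^ n : ℝ≥0) = ((2 : ℝ)⁻¹ ^ n : ℝ) := by simp
  refine ⟨⟨dist, dist_self, dist_comm, dist_triangle⟩, fun n x y hxy => ?_, fun n x y hxy => ?_⟩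
  · calc dist x y ≤ d₀ x y := hdist_le x y
      _ ≤ ((2⁻¹ : ℝ≥0) ^ n : ℝ≥0) := by
          exact_mod_cast (not_le.1 (mt hle_d₀.1 (not_not.2 hxy))).le
      _ = (2 : ℝ)⁻¹ ^ n := hcast n
  · refine not_not.1 (mt hle_d₀.2 (not_le.2 ?_))
    rw [← NNReal.coe_lt_coe, hcast]
    calc (d₀ x y : ℝ) ≤ 2 * dist x y := hle_dist x y
      _ < 2 * (2 : ℝ)⁻¹ ^ (n + 1) := by gcongr; exact hxy
      _ = (2 : ℝ)⁻¹ ^ n := by rw [pow_succ]; ring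

end PseudoMetric

section UniformSpace

variable {X : Type*} [UniformSpace X] {d : PseudoMetric X ℝ}

theorem PseudoMetric.uniformContinuous_of_abs_sub_le
    (hd : ∀ δ > 0, {p : X × X | d p.1 p.2 < δ} ∈ 𝓤 X) {φ : X → ℝ} {K : ℝ≥0}
    (hφ : ∀ x y, |φ x - φ y| ≤ K * d x y) : UniformContinuous φ := by
  rw [UniformContinuous, Metric.uniformity_basis_dist.tendsto_right_iff]
  intro ε hε
  have hK : (0 : ℝ) < K + 1 := by positivity
  filter_upwards [hd (ε / (K + 1)) (by positivity)] with p hp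
  rw [Real.dist_eq]
  calc |φ p.1 - φ p.2| ≤ K * d p.1 p.2 := hφ _ _
    _ ≤ K * (ε / (K + 1)) := by gcongr
    _ < ε := by rw [mul_div_assoc', div_lt_iff₀ hK]; linarith

theorem PseudoMetric.continuous_left (hd : ∀ δ > 0, {p : X × X | d p.1 p.2 < δ} ∈ 𝓤 X) (c : X) :
    Continuous fun x => d x c :=
  (uniformContinuous_of_abs_sub_le hd (K := 1) fun x y => by
    simpa using d.abs_sub_le x y c).continuous

theorem UniformSpace.exists_pseudoMetric (s : ℕ → Set (X × X)) (hs : ∀ n, s n ∈ 𝓤 X) :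
    ∃ d : PseudoMetric X ℝ, (∀ x y, d x y ≤ 1) ∧
      (∀ δ > 0, {p : X × X | d p.1 p.2 < δ} ∈ 𝓤 X) ∧
      ∀ n x y, d x y < 2⁻¹ ^ (n + 2) → (x, y) ∈ s n := by
  choose t ht htsymm htcomp using fun n (S : {S // S ∈ 𝓤 X}) =>
    comp_comp_symm_mem_uniformity_sets (inter_mem S.2 (hs n))
  let W : ℕ → {S // S ∈ 𝓤 X} := fun n =>
    Nat.rec ⟨univ, univ_mem⟩ (fun n S => ⟨t n S, ht n S⟩) n
  have hrefl : ∀ n x, (x, x) ∈ (W n).1 := fun n x => refl_mem_uniformity (W n).2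
  have hcomp : ∀ n x y z w, (x, y) ∈ (W (n + 1)).1 → (y, z) ∈ (W (n + 1)).1 →
      (z, w) ∈ (W (n + 1)).1 → (x, w) ∈ (W n).1 ∩ s n :=
    fun n x y z w hxy hyz hzw => htcomp n (W n) ⟨z, ⟨y, hxy, hyz⟩, hzw⟩
  obtain ⟨d, hle, hlt⟩ := PseudoMetric.exists_of_chain (fun n => (W n).1) hrefl
    (fun n x y hxy => by
      cases n with
      | zero => trivial
      | succ n => have := htsymm n (W n); exact SetRel.symm _ hxy)
    (fun n x y z w hxy hyz hzw => (hcomp n x y z w hxy hyz hzw).1)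
  refine ⟨d, fun x y => by simpa using hle 0 x y trivial, fun δ hδ => ?_,
    fun n x y hxy => (hcomp n x y y y (hlt (n + 1) x y hxy) (hrefl (n + 1) y) (hrefl (n + 1) y)).2⟩
  obtain ⟨n, hn⟩ := exists_pow_lt_of_lt_one hδ (by norm_num : (2 : ℝ)⁻¹ < 1)
  exact mem_of_superset (W n).2 fun p hp => (hle n p.1 p.2 hp).trans_lt hn

end UniformSpace

theorem le_eight_mul_of_forall_lt_pow {a r : ℝ} (hr : 0 ≤ r) (ha : a ≤ 1)
    (h : ∀ n : ℕ, r < 2⁻¹ ^ (n + 2) → a ≤ 2⁻¹ ^ n) : a ≤ 8 * r := by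
  by_contra! hlt
  obtain ⟨k, hk, hka⟩ := exists_nat_pow_near_of_lt_one (by linarith) ha
    (by norm_num : (0 : ℝ) < 2⁻¹) (by norm_num)
  have hr' : r < 2⁻¹ ^ (k + 1 + 2) := by
    have : (2 : ℝ)⁻¹ ^ (k + 1 + 2) = 2⁻¹ ^ k / 8 := by ring
    rw [this]; linarith
  linarith [h (k + 1) hr']

section TopologicalGroup

variable {G : Type*} [Group G] [TopologicalSpace G]

/-- `F` is `8`-Lipschitz on `S` for a suitable right uniformly continuous pseudometric, so McShane's
extension applies. -/
theorem exists_continuous_eqOn_of_rightUniformOn [IsTopologicalGroup G] {S : Set G} {F : G → ℝ}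
    (hosc : ∀ g ∈ S, ∀ h ∈ S, |F g - F h| ≤ 1)
    (hF : ∀ ε > 0, ∃ U ∈ 𝓝 (1 : G), ∀ g ∈ S, ∀ h ∈ S, g * h⁻¹ ∈ U → |F g - F h| ≤ ε) :
    ∃ F' : G → ℝ, Continuous F' ∧ EqOn F' F S := by
  let := IsTopologicalGroup.rightUniformSpace G
  obtain ⟨d, -, hd, hdS⟩ := UniformSpace.exists_pseudoMetric
    (fun n => {p : G × G | p.1 ∈ S → p.2 ∈ S → |F p.1 - F p.2| ≤ 2⁻¹ ^ n}) fun n => by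
      obtain ⟨U, hU, hUS⟩ := hF _ (pow_pos (by norm_num : (0 : ℝ) < 2⁻¹) n)
      refine mem_comap.2 ⟨U⁻¹, inv_mem_nhds_one G hU, fun p hp hp₁ hp₂ => hUS _ hp₁ _ hp₂ ?_⟩
      simpa using hp
  obtain ⟨F', hF', hEq⟩ := PseudoMetric.exists_extension (d := d) (K := 8) (S := S) (F := F)
    fun g hg h hh => by
      exact_mod_cast le_eight_mul_of_forall_lt_pow (d.nonneg g h) (hosc g hg h hh)
        fun n hn => hdS n g h hn hg hh
  exact ⟨F', (d.uniformContinuous_of_abs_sub_le hd hF').continuous, hEq⟩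

variable {Y : Type*} [UniformSpace Y] {f : G → Y} {d : PseudoMetric Y ℝ}

theorem RightProxCont.exists_nhds_one (hf : RightProxCont ‹_› f)
    (hd : ∀ δ > 0, {p : Y × Y | d p.1 p.2 < δ} ∈ 𝓤 Y) {φ : Y → ℝ}
    (hφ : ∀ a b, |φ a - φ b| ≤ d a b) (hbdd : ∃ C, ∀ y, |φ y| ≤ C) {ε : ℝ} (hε : 0 < ε) :
    ∃ U ∈ 𝓝 (1 : G), ∀ g h, g * h⁻¹ ∈ U → |φ (f g) - φ (f h)| < ε := by
  obtain ⟨U, hU, hUε⟩ := hf φ (d.uniformContinuous_of_abs_sub_le hd (K := 1) (by simpa using hφ))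
    hbdd _ (Metric.dist_mem_uniformity hε)
  exact ⟨U, hU, fun g h hgh => by simpa [Real.dist_eq] using hUε g h hgh⟩

theorem RightProxCont.continuous [IsTopologicalGroup G] (hf : RightProxCont ‹_› f) :
    Continuous f := by
  refine continuous_iff_continuousAt.2 fun x₀ s hs => ?_
  obtain ⟨V, hV, hVs⟩ := UniformSpace.mem_nhds_iff.1 hs
  obtain ⟨d, hd1, hd, hdV⟩ := UniformSpace.exists_pseudoMetric (fun _ => V) fun _ => hV
  obtain ⟨U, hU, hUφ⟩ := hf.exists_nhds_one hd (φ := fun y => d y (f x₀))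
    (fun a b => d.abs_sub_le a b _)
    ⟨1, fun y => by rw [abs_of_nonneg (d.nonneg _ _)]; exact hd1 _ _⟩
    (by norm_num : (0 : ℝ) < 2⁻¹ ^ (0 + 2))
  have hnhds : {g | g * x₀⁻¹ ∈ U} ∈ 𝓝 x₀ := by
    rw [← nhds_translation_mul_inv x₀]
    exact preimage_mem_comap hU
  refine mem_map.2 (mem_of_superset hnhds fun g hg => hVs (hdV 0 _ _ ?_))
  simpa [d.symm (f x₀), abs_of_nonneg (d.nonneg _ _)] using hUφ g x₀ hg

end TopologicalGroup

/-- A maximal free set `M` with `#M < #ι` would cover `ι` by `M` and the relatives of its points,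
a union of fewer than `#ι` sets of size `< #ι`. -/
theorem Cardinal.exists_pairwise_not_of_isRegular {ι : Type*} (hι : (#ι).IsRegular)
    (R : ι → ι → Prop) (hR : ∀ i, #{j | R i j} < #ι) (hR' : ∀ j, #{i | R i j} < #ι) :
    ∃ M : Set ι, #M = #ι ∧ M.Pairwise fun i j => ¬R i j := by
  obtain ⟨M, -, hM⟩ := zorn_subset_nonempty {M : Set ι | M.Pairwise fun i j => ¬R i j}
    (fun c hc hchain _ => ⟨⋃₀ c, (pairwise_sUnion hchain.directedOn).2 hc,
      fun _ => subset_sUnion_of_mem⟩) ∅ (pairwise_empty _)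
  refine ⟨M, le_antisymm (mk_le_of_injective Subtype.val_injective) (not_lt.1 fun hMlt => ?_),
    hM.prop⟩
  have hcover : (Set.univ : Set ι) ⊆ M ∪ ⋃ b ∈ M, ({i | R i b} ∪ {j | R b j}) := by
    intro i _
    by_cases hi : i ∈ M
    · exact Or.inl hi
    have hins : ¬(insert i M).Pairwise fun i j => ¬R i j := fun h =>
      hi (hM.mem_of_prop_insert h)
    rw [pairwise_insert] at hins
    push Not at hins
    obtain ⟨b, hb, -, hib⟩ := hins hM.prop
    refine Or.inr (mem_biUnion hb ?_)
    by_cases h : R i b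
    · exact Or.inl h
    · exact Or.inr (hib h)
  have hsmall : #↥(⋃ b ∈ M, ({i | R i b} ∪ {j | R b j})) < #ι :=
    (card_biUnion_lt_iff_forall_of_isRegular hι hMlt).2 fun b _ =>
      (mk_union_le _ _).trans_lt (add_lt_of_lt hι.aleph0_le (hR' b) (hR b))
  have hle : #ι ≤ #↥(M ∪ ⋃ b ∈ M, ({i | R i b} ∪ {j | R b j})) :=
    mk_univ.symm.trans_le (mk_le_mk_of_subset hcover)
  exact hle.not_gt ((mk_union_le _ _).trans_lt (add_lt_of_lt hι.aleph0_le hMlt hsmall))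

theorem abs_min_le_abs_of_nonneg {a b : ℝ} (hb : 0 ≤ b) : |min a b| ≤ |a| := by
  rw [abs_le]
  exact ⟨le_min (neg_abs_le a) (by linarith [abs_nonneg a]),
    (min_le_left a b).trans (le_abs_self a)⟩

section Separation

variable {Z ι : Type*} [PseudoMetricSpace Z]

theorem exists_lipschitz_gap_of_near {w w' : ι → Z} {ε : ℝ} (hfar : ∀ i, ε < dist (w i) (w' i))
    (c : Z) : ∃ φ : Z → ℝ, LipschitzWith 1 φ ∧ (∃ C, ∀ x, |φ x| ≤ C) ∧
      ∀ i, dist (w i) c < ε / 3 → ε / 3 ≤ |φ (w i) - φ (w' i)| := by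
  refine ⟨fun x => min ε (dist x c), (LipschitzWith.dist_left c).const_min ε,
    ⟨|ε|, fun x => abs_min_le_abs_of_nonneg dist_nonneg⟩, fun i hi => ?_⟩
  have hw' : ε - dist (w i) c ≤ min ε (dist (w' i) c) :=
    le_min (by linarith [dist_nonneg (x := w i) (y := c)])
      (by linarith [hfar i, dist_triangle_right (w i) (w' i) c])
  rw [abs_sub_comm]
  linarith [le_abs_self (min ε (dist (w' i) c) - min ε (dist (w i) c)),
    min_le_right ε (dist (w i) c)]

theorem exists_lipschitz_gap_of_free {y z : ι → Z} {θ : ℝ} {M : Set ι}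
    (hM : ∀ i ∈ M, ∀ j ∈ M, θ ≤ dist (y j) (z i)) :
    ∃ φ : Z → ℝ, LipschitzWith 1 φ ∧ (∃ C, ∀ x, |φ x| ≤ C) ∧
      ∀ j ∈ M, θ ≤ |φ (y j) - φ (z j)| := by
  refine ⟨fun x => min θ (Metric.infDist x (z '' M)),
    (Metric.lipschitz_infDist_pt _).const_min θ,
    ⟨|θ|, fun x => abs_min_le_abs_of_nonneg Metric.infDist_nonneg⟩, fun j hj => ?_⟩
  have hy : θ ≤ Metric.infDist (y j) (z '' M) := by
    refine not_lt.1 fun h => ?_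
    obtain ⟨_, ⟨i, hi, rfl⟩, hlt⟩ := (Metric.infDist_lt_iff ⟨z j, mem_image_of_mem z hj⟩).1 h
    exact (hM i hi j hj).not_gt hlt
  have hz : Metric.infDist (z j) (z '' M) = 0 :=
    Metric.infDist_zero_of_mem (mem_image_of_mem z hj)
  simp only [min_eq_left hy, hz]
  linarith [le_abs_self (θ - min θ 0), min_le_right θ 0]

/-- Either some point is `ε / 3`-close to `#ι` of the points `y j` (or `z i`), and the distance to
it separates, or the relation `dist (y j) (z i) < ε / 3` has a free set of size `#ι`, and the
distance to its points `z i` separates. -/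
theorem exists_lipschitz_gap (hι : (#ι).IsRegular) {y z : ι → Z} {ε : ℝ}
    (hfar : ∀ i, ε < dist (y i) (z i)) :
    ∃ L : Set ι, #L = #ι ∧ ∃ φ : Z → ℝ, LipschitzWith 1 φ ∧ (∃ C, ∀ x, |φ x| ≤ C) ∧
      ∀ j ∈ L, ε / 3 ≤ |φ (y j) - φ (z j)| := by
  by_cases hz : ∃ i, ¬#{j | dist (y j) (z i) < ε / 3} < #ι
  · obtain ⟨i, hi⟩ := hz
    obtain ⟨φ, hφ, hbdd, hgap⟩ := exists_lipschitz_gap_of_near hfar (z i)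
    exact ⟨_, le_antisymm (mk_set_le _) (not_lt.1 hi), φ, hφ, hbdd, fun j hj => hgap j hj⟩
  by_cases hy : ∃ j, ¬#{i | dist (y j) (z i) < ε / 3} < #ι
  · obtain ⟨j, hj⟩ := hy
    obtain ⟨φ, hφ, hbdd, hgap⟩ :=
      exists_lipschitz_gap_of_near (w := z) (w' := y)
        (fun i => dist_comm (y i) (z i) ▸ hfar i) (y j)
    refine ⟨_, le_antisymm (mk_set_le _) (not_lt.1 hj), φ, hφ, hbdd, fun i hi => ?_⟩
    rw [abs_sub_comm]
    exact hgap i (by rw [dist_comm]; exact hi)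
  push Not at hy hz
  obtain ⟨M, hMcard, hM⟩ := exists_pairwise_not_of_isRegular hι _ hy hz
  obtain ⟨φ, hφ, hbdd, hgap⟩ := exists_lipschitz_gap_of_free (y := y) (z := z) (θ := ε / 3)
    (M := M) fun i hi j hj => by
      rcases eq_or_ne i j with rfl | hij
      · linarith [hfar i, dist_nonneg (x := y i) (y := z i)]
      · exact not_lt.1 (hM hj hi hij.symm)
  exact ⟨M, hMcard, φ, hφ, hbdd, hgap⟩

end Separation

section Displacement

variable {G Y : Type*} [Group G] (d : PseudoMetric Y ℝ) (f : G → Y)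

noncomputable def displacement (x : G) : ℝ := ⨆ t, d (f (x * t)) (f t)

variable {d f}

theorem bddAbove_displacement (hd1 : ∀ a b, d a b ≤ 1) (x : G) :
    BddAbove (range fun t => d (f (x * t)) (f t)) :=
  ⟨1, by rintro _ ⟨t, rfl⟩; exact hd1 _ _⟩

theorem le_displacement (hd1 : ∀ a b, d a b ≤ 1) (x t : G) :
    d (f (x * t)) (f t) ≤ displacement d f x :=
  le_ciSup (bddAbove_displacement hd1 x) t

theorem dist_le_displacement_mul_inv (hd1 : ∀ a b, d a b ≤ 1) (g h : G) :
    d (f g) (f h) ≤ displacement d f (g * h⁻¹) := by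
  simpa using le_displacement hd1 (g * h⁻¹) h

theorem displacement_mem_Icc (hd1 : ∀ a b, d a b ≤ 1) (x : G) :
    displacement d f x ∈ Icc 0 1 :=
  ⟨(d.nonneg _ _).trans (le_displacement hd1 x 1), ciSup_le fun _ => hd1 _ _⟩

theorem displacement_one : displacement d f 1 = 0 := by
  simp [displacement]

theorem displacement_le_mul_inv_add (hd1 : ∀ a b, d a b ≤ 1) (g h : G) :
    displacement d f g ≤ displacement d f (g * h⁻¹) + displacement d f h :=
  ciSup_le fun t => calc
    d (f (g * t)) (f t) ≤ d (f (g * t)) (f (h * t)) + d (f (h * t)) (f t) := d.triangle _ _ _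
    _ ≤ displacement d f (g * h⁻¹) + displacement d f h := by
      gcongr
      · simpa [mul_assoc] using le_displacement hd1 (g * h⁻¹) (h * t)
      · exact le_displacement hd1 h t

theorem displacement_inv_le (hd1 : ∀ a b, d a b ≤ 1) (x : G) :
    displacement d f x⁻¹ ≤ displacement d f x :=
  ciSup_le fun t => by simpa [d.symm] using le_displacement hd1 x (x⁻¹ * t)

theorem abs_sub_displacement_le (hd1 : ∀ a b, d a b ≤ 1) (g h : G) :
    |displacement d f g - displacement d f h| ≤ displacement d f (g * h⁻¹) := by
  have hinv : displacement d f (h * g⁻¹) ≤ displacement d f (g * h⁻¹) := by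
    simpa using displacement_inv_le hd1 (g * h⁻¹)
  rw [abs_sub_le_iff]
  constructor
  · linarith [displacement_le_mul_inv_add (f := f) hd1 g h]
  · linarith [displacement_le_mul_inv_add (f := f) hd1 h g]

theorem lowerSemicontinuous_displacement [TopologicalSpace G] [ContinuousMul G]
    [TopologicalSpace Y] (hd1 : ∀ a b, d a b ≤ 1) (hdc : ∀ c, Continuous fun y => d y c)
    (hf : Continuous f) : LowerSemicontinuous (displacement d f) :=
  lowerSemicontinuous_ciSup (bddAbove_displacement hd1) fun t =>
    ((hdc _).comp (hf.comp (continuous_mul_const t))).lowerSemicontinuous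

end Displacement

section KeyStep

variable {G : Type u} [Group G] [TopologicalSpace G]
  {Y : Type*} [UniformSpace Y] {d : PseudoMetric Y ℝ} {f : G → Y}

theorem RelORadial.exists_regular_family [ContinuousMul G] {S : Set G} (hS : RelORadial S)
    (h1 : (1 : G) ∈ S) (hdc : ∀ c, Continuous fun y => d y c) (hf : Continuous f) {ε δ : ℝ}
    (hε : 0 < ε) (hδ : 0 < δ) (hD : (1 : G) ∈ closure (S ∩ {x | ε < displacement d f x})) :
    ∃ (ι : Type u) (x t : ι → G), (#ι).IsRegular ∧ (∀ i, ε < d (f (x i * t i)) (f (t i))) ∧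
      ∀ L : Set ι, #L = #ι →
        (1 : G) ∈ closure (⋃ i ∈ L, {g | d (f (g * t i)) (f (x i * t i)) < δ}) := by
  choose t ht using fun x : ↥(S ∩ {x | ε < displacement d f x}) =>
    exists_lt_of_lt_ciSup (show ε < ⨆ s, d (f (x * s)) (f s) from x.2.2)
  let O : ↥(S ∩ {x | ε < displacement d f x}) → Set G := fun x =>
    {g | ε < d (f (g * t x)) (f (t x)) ∧ d (f (g * t x)) (f (x * t x)) < δ}
  have hcont : ∀ c s, Continuous fun g : G => d (f (g * s)) c := fun c s =>
    (hdc c).comp (hf.comp (continuous_mul_const s))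
  have hO : ∀ x, IsOpen (O x) := fun x =>
    (isOpen_lt continuous_const (hcont _ _)).inter (isOpen_lt (hcont _ _) continuous_const)
  have h1O : ∀ x, (1 : G) ∉ closure (O x) := fun x h1x => by
    have : ε ≤ d (f (1 * t x)) (f (t x)) := closure_minimal (fun g hg => le_of_lt hg.1)
      (isClosed_le continuous_const (hcont (f (t x)) (t x))) h1x
    rw [one_mul, d.refl] at this
    linarith
  have h1U : (1 : G) ∈ closure (⋃ x, O x ∩ S) :=
    closure_mono (fun g hg => mem_iUnion.2
      ⟨⟨g, hg⟩, (⟨⟨ht ⟨g, hg⟩, by simpa using hδ⟩, hg.1⟩ : g ∈ O ⟨g, hg⟩ ∩ S)⟩) hD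
  obtain ⟨J, hJ, hJL⟩ := hS O 1 h1 hO h1U h1O
  refine ⟨J, fun j => j.1, fun j => t j.1, hJ, fun j => ht j.1, fun L hL => ?_⟩
  refine closure_mono ?_ (hJL (Subtype.val '' L) (by simp)
    (by rw [mk_image_eq Subtype.val_injective, hL]))
  intro g hg
  simp only [mem_iUnion] at hg ⊢
  obtain ⟨_, ⟨j, hj, rfl⟩, hg⟩ := hg
  exact ⟨j, hj, hg.2⟩

theorem RightProxCont.not_regular_family (hf : RightProxCont ‹_› f)
    (hd : ∀ δ > 0, {p : Y × Y | d p.1 p.2 < δ} ∈ 𝓤 Y) {ι : Type*} (hι : (#ι).IsRegular)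
    {x t : ι → G} {ε : ℝ} (hε : 0 < ε) (hfar : ∀ i, ε < d (f (x i * t i)) (f (t i)))
    (hnear : ∀ L : Set ι, #L = #ι →
      (1 : G) ∈ closure (⋃ i ∈ L, {g | d (f (g * t i)) (f (x i * t i)) < ε / 6})) : False := by
  obtain ⟨L, hL, φ, hφ, hbdd, hgap⟩ := @exists_lipschitz_gap Y ι d.toPseudoMetricSpace hι
    (fun i => f (x i * t i)) (fun i => f (t i)) ε hfar
  have hφd : ∀ a b, |φ a - φ b| ≤ d a b := fun a b => by
    have h := @LipschitzWith.dist_le_mul _ _ d.toPseudoMetricSpace _ _ _ hφ a b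
    rwa [Real.dist_eq, NNReal.coe_one, one_mul] at h
  obtain ⟨U, hU, hUφ⟩ := hf.exists_nhds_one hd hφd hbdd (by positivity : 0 < ε / 6)
  obtain ⟨g, hgU, hg⟩ := mem_closure_iff_nhds.1 (hnear L hL) U hU
  simp only [mem_iUnion] at hg
  obtain ⟨i, hi, hgi⟩ := hg
  have hfar' := hUφ (g * t i) (t i) (by simpa using hgU)
  have hnear' := (hφd (f (g * t i)) (f (x i * t i))).trans_lt hgi
  rw [abs_sub_comm] at hnear'
  have := abs_sub_le (φ (f (x i * t i))) (φ (f (g * t i))) (φ (f (t i)))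
  linarith [hgap i hi]

theorem RightProxCont.exists_displacement_le [IsTopologicalGroup G] (hf : RightProxCont ‹_› f)
    (hd1 : ∀ a b, d a b ≤ 1) (hd : ∀ δ > 0, {p : Y × Y | d p.1 p.2 < δ} ∈ 𝓤 Y) {S : Set G}
    (hS : RelORadial S) (h1 : (1 : G) ∈ S) {ε : ℝ} (hε : 0 < ε) :
    ∃ U ∈ 𝓝 (1 : G), ∀ x ∈ U, x ∈ closure S → displacement d f x ≤ ε := by
  by_contra! h
  have hdc := d.continuous_left hd
  have hfc := hf.continuous
  have hT : IsOpen {x | ε < displacement d f x} :=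
    (lowerSemicontinuous_displacement hd1 hdc hfc).isOpen_preimage ε
  have hD : (1 : G) ∈ closure ({x | ε < displacement d f x} ∩ closure S) :=
    mem_closure_iff_nhds.2 fun U hU => by
      obtain ⟨x, hxU, hxS, hx⟩ := h U hU
      exact ⟨x, hxU, hx, hxS⟩
  obtain ⟨ι, x, t, hι, hfar, hnear⟩ := hS.exists_regular_family h1 hdc hfc hε
    (by positivity : 0 < ε / 6) (by simpa [inter_comm] using closure_mono hT.inter_closure hD)
  exact hf.not_regular_family hd hι hε hfar hnear

end KeyStep

/-- Theorem 2.4(1): a topological group functionally generated by the closures of sets `A`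
with `A * A⁻¹` relatively o-radial is proximally fine. -/
theorem stmt_3 {G : Type u} [Group G] [TopologicalSpace G] [IsTopologicalGroup G]
    (hgen : FunGen G {B | ∃ A : Set G, B = closure A ∧ RelORadial (A * A⁻¹)}) :
    ProxFineGroup ‹TopologicalSpace G› := by
  intro Y _ f hf V hV
  by_contra! hV'
  obtain ⟨d, hd1, hd, hdV⟩ := UniformSpace.exists_pseudoMetric (fun _ => V) fun _ => hV
  have hdisc : ¬Continuous (displacement d f) := fun hc => by
    obtain ⟨g, h, hgh, hfgh⟩ := hV' _ (hc.continuousAt.preimage_mem_nhds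
      (Iio_mem_nhds (by rw [displacement_one]; positivity : displacement d f 1 < 2⁻¹ ^ (0 + 2))))
    exact hfgh (hdV 0 _ _ ((dist_le_displacement_mul_inv hd1 g h).trans_lt hgh))
  obtain ⟨_, ⟨A, rfl, hA⟩, hnoext⟩ := hgen _ hdisc
  rcases A.eq_empty_or_nonempty with rfl | ⟨a, ha⟩
  · exact hnoext ⟨0, continuous_const, by simp⟩
  refine hnoext (exists_continuous_eqOn_of_rightUniformOn (fun g _ h _ => ?_) fun ε hε => ?_)
  · obtain ⟨hg₀, hg₁⟩ := displacement_mem_Icc (f := f) hd1 g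
    obtain ⟨hh₀, hh₁⟩ := displacement_mem_Icc (f := f) hd1 h
    exact abs_sub_le_of_nonneg_of_le hg₀ hg₁ hh₀ hh₁
  obtain ⟨U, hU, hUε⟩ := hf.exists_displacement_le hd1 hd hA
    (by simpa using mul_mem_mul ha (inv_mem_inv.2 ha)) hε
  refine ⟨U, hU, fun g hg h hh hgh => (abs_sub_displacement_le hd1 g h).trans (hUε _ hgh ?_)⟩
  exact map_mem_closure₂ (f := fun g h : G => g * h⁻¹) (by fun_prop) hg hh
    fun a ha b hb => mul_mem_mul ha (inv_mem_inv.2 hb)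
end

section
/- The subgroup S of finitary permutations is a closed subgroup of (G, τ), where G = Sym(ℕ) carries the topology τ. Consequently the quotient group G/S with the quotient topology is Hausdorff. -/
/-! A permutation `g` moving infinitely many points maps some infinite set `A` off itself: by
Zorn's lemma take `A` maximal with `g '' A ∩ A = ∅`; maximality puts every moved point in
`A ∪ g '' A ∪ g ⁻¹' A`, so `A` cannot be finite. The permutations that respect the partition
`{A, ℕ \ A}` in the same way as `g` form a `τ`-neighbourhood of `g`, and each of them again maps
`A` off itself, hence moves infinitely many points. So `S` is closed, and since `τ` is a group
topology the quotient by the closed normal subgroup `S` is Hausdorff. -/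

/-- The Samuel (precompact) uniformity on `ℕ`: a basis of entourages is given by the sets
`⋃ i, A i × A i` for `{A 1, …, A n}` a finite partition of `ℕ`; equivalently, it is the
infimum of the uniformities pulled back from finite discrete uniform spaces, a basis being
given by the sets `{(x, y) | c x = c y}` for `c : ℕ → Fin n`. -/
noncomputable def samuelNat : UniformSpace ℕ :=
  ⨅ (n : ℕ) (c : ℕ → Fin n), UniformSpace.comap c ⊥

/-- The topology `τ` on `G = Sym(ℕ)`: the topology of uniform convergence when the target `ℕ`
carries the Samuel uniformity.  A basis of neighborhoods of the identity is given by the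
subgroups `H_π = {g : g (A i) = A i, i = 1, …, n}`, `π = {A 1, …, A n}` a finite partition
of `ℕ`. -/
noncomputable def tauPerm : TopologicalSpace (Equiv.Perm ℕ) :=
  TopologicalSpace.induced (fun g => UniformFun.ofFun (⇑g))
    (@UniformFun.uniformSpace ℕ ℕ samuelNat).toTopologicalSpace

/-- The subgroup `S` of finitary permutations of `ℕ`, i.e. those moving only finitely many
points. -/
def finitaryS : Subgroup (Equiv.Perm ℕ) where
  carrier := {g | {x | g x ≠ x}.Finite}
  one_mem' := by simp
  mul_mem' := by
    intro a b ha hb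
    refine (ha.union hb).subset fun x hx => ?_
    by_cases h : b x = x
    · exact Or.inl (by simpa [Equiv.Perm.mul_apply, h] using hx)
    · exact Or.inr h
  inv_mem' := by
    intro a ha
    have h : {x | a⁻¹ x ≠ x} = {x | a x ≠ x} := by
      ext x
      simp only [Set.mem_setOf_eq, ne_eq, Equiv.Perm.inv_eq_iff_eq]
      exact not_congr eq_comm
    show {x | a⁻¹ x ≠ x}.Finite
    rw [h]; exact ha

/-- `S` is a normal subgroup of `G`. -/
instance finitaryS_normal : finitaryS.Normal := by
  constructor
  intro h hh g
  have hsub : {x | (g * h * g⁻¹) x ≠ x} ⊆ (fun x => g⁻¹ x) ⁻¹' {x | h x ≠ x} := by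
    intro x hx hc
    apply hx
    simp only [Equiv.Perm.mul_apply, hc]
    exact g.apply_symm_apply x
  exact (hh.preimage (fun y _ z _ hyz => (Equiv.injective g⁻¹) hyz)).subset hsub

open Filter Topology

theorem Function.Injective.exists_infinite_disjoint_image {α : Type*} {f : α → α}
    (hf : Function.Injective f) (hmoved : {x | f x ≠ x}.Infinite) :
    ∃ A : Set α, A.Infinite ∧ Disjoint (f '' A) A := by
  obtain ⟨A, hA⟩ := zorn_subset {A : Set α | Disjoint (f '' A) A} fun c hc hchain => by
    refine ⟨⋃₀ c, ?_, fun s hs => Set.subset_sUnion_of_mem hs⟩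
    simp only [Set.mem_ofPred_eq, Set.disjoint_left, Set.mem_image, Set.mem_sUnion]
    rintro _ ⟨a, ⟨s, hs, has⟩, rfl⟩ ⟨t, ht, hat⟩
    rcases hchain.total hs ht with hst | hts
    · exact Set.disjoint_left.1 (hc ht) ⟨a, hst has, rfl⟩ hat
    · exact Set.disjoint_left.1 (hc hs) ⟨a, has, rfl⟩ (hts hat)
  refine ⟨A, fun hfin => hmoved ?_, hA.prop⟩
  -- a moved point outside `A ∪ f '' A ∪ f ⁻¹' A` could be added to the maximal set `A`
  have hcover : {x | f x ≠ x} ⊆ A ∪ f '' A ∪ f ⁻¹' A := by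
    intro x hx
    by_contra hxA
    simp only [Set.mem_union, not_or] at hxA
    obtain ⟨⟨hxA, hxfA⟩, hfxA⟩ := hxA
    have hins : Disjoint (f '' insert x A) (insert x A) := by
      rw [Set.image_insert_eq, Set.disjoint_insert_left, Set.disjoint_insert_right,
        Set.mem_insert_iff, not_or]
      exact ⟨⟨hx, hfxA⟩, hxfA, hA.prop⟩
    exact hxA (hA.mem_of_prop_insert hins)
  exact ((hfin.union (hfin.image f)).union (hfin.preimage hf.injOn)).subset hcover

abbrev Coloring : Type := Σ n : ℕ, ℕ → Fin n

theorem samuelNat_uniformity_hasBasis :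
    (@uniformity ℕ samuelNat).HasBasis (fun _ : Coloring => True)
      (fun c => {q : ℕ × ℕ | c.2 q.1 = c.2 q.2}) := by
  have heq : @uniformity ℕ samuelNat = ⨅ c : Coloring, 𝓟 {q : ℕ × ℕ | c.2 q.1 = c.2 q.2} := by
    unfold samuelNat
    rw [iInf_uniformity, iInf_sigma]
    refine iInf_congr fun n => ?_
    rw [iInf_uniformity]
    refine iInf_congr fun c => ?_
    rw [uniformity_comap, bot_uniformity, comap_principal]
    rfl
  have : Nonempty Coloring := ⟨⟨1, fun _ => 0⟩⟩
  rw [heq]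
  refine hasBasis_iInf_principal fun ⟨m, c⟩ ⟨n, d⟩ => ?_
  -- the common refinement of two colorings is the product coloring
  refine ⟨⟨m * n, fun x => finProdFinEquiv (c x, d x)⟩, ?_, ?_⟩ <;>
    intro q hq <;> have := Prod.ext_iff.1 (finProdFinEquiv.injective hq)
  exacts [this.1, this.2]

theorem tauPerm_nhds_hasBasis (g : Equiv.Perm ℕ) :
    (@nhds _ tauPerm g).HasBasis (fun _ : Coloring => True)
      (fun c => {h : Equiv.Perm ℕ | ∀ x, c.2 (g x) = c.2 (h x)}) := by
  let : UniformSpace ℕ := samuelNat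
  rw [show @nhds _ tauPerm g = comap (fun h : Equiv.Perm ℕ => UniformFun.ofFun ⇑h)
    (𝓝 (UniformFun.ofFun ⇑g)) from nhds_induced _ _]
  exact (UniformFun.hasBasis_nhds_of_basis ℕ ℕ _ samuelNat_uniformity_hasBasis).comap _

theorem tauPerm_isTopologicalGroup : @IsTopologicalGroup (Equiv.Perm ℕ) tauPerm _ := by
  let := tauPerm
  refine { continuous_mul := continuous_iff_continuousAt.2 ?_,
           continuous_inv := continuous_iff_continuousAt.2 ?_ }
  · rintro ⟨g, h⟩
    rw [ContinuousAt, (tauPerm_nhds_hasBasis (g * h)).tendsto_right_iff]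
    rintro ⟨n, c⟩ -
    -- `g' * h'` preserves the `c`-colors of `g * h` once `h'` preserves the `(c ∘ g)`-colors of `h`
    have hprod := prod_mem_nhds ((tauPerm_nhds_hasBasis g).mem_of_mem (i := ⟨n, c⟩) trivial)
      ((tauPerm_nhds_hasBasis h).mem_of_mem (i := ⟨n, c ∘ g⟩) trivial)
    filter_upwards [hprod]
    rintro ⟨g', h'⟩ ⟨hg', hh'⟩ x
    exact (hh' x).trans (hg' (h' x))
  · intro g
    rw [ContinuousAt, (tauPerm_nhds_hasBasis g⁻¹).tendsto_right_iff]
    rintro ⟨n, c⟩ -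
    filter_upwards [(tauPerm_nhds_hasBasis g).mem_of_mem (i := ⟨n, c ∘ ⇑g⁻¹⟩) trivial]
    intro f hf x
    simpa using (hf (f⁻¹ x)).symm

theorem tauPerm_setOf_apply_mem_iff_mem_nhds (g : Equiv.Perm ℕ) (A : Set ℕ) :
    {h : Equiv.Perm ℕ | ∀ x, h x ∈ A ↔ g x ∈ A} ∈ @nhds _ tauPerm g := by
  classical
  let c : ℕ → Fin 2 := fun x => if x ∈ A then 0 else 1
  refine mem_of_superset ((tauPerm_nhds_hasBasis g).mem_of_mem (i := ⟨2, c⟩) trivial) ?_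
  intro h hh x
  have hcx := hh x
  by_cases hg : g x ∈ A <;> by_cases hhx : h x ∈ A <;> simp [c, hg, hhx] at hcx ⊢

theorem isClosed_finitaryS : @IsClosed _ tauPerm (finitaryS : Set (Equiv.Perm ℕ)) := by
  let := tauPerm
  refine isOpen_compl_iff.1 (isOpen_iff_mem_nhds.2 fun g hg => ?_)
  obtain ⟨A, hA, hdisj⟩ := g.injective.exists_infinite_disjoint_image hg
  filter_upwards [tauPerm_setOf_apply_mem_iff_mem_nhds g A] with h hh
  refine fun hfin => hA (Set.Finite.subset hfin fun a ha hfix => ?_)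
  exact Set.disjoint_left.1 hdisj (Set.mem_image_of_mem g ha) ((hh a).1 (by rwa [hfix]))

/-- `S` is a closed subgroup of `(G, τ)`, and the quotient group `G/S`, with the
quotient topology, is Hausdorff. -/
theorem stmt_9 :
    @IsClosed (Equiv.Perm ℕ) tauPerm (finitaryS : Set (Equiv.Perm ℕ)) ∧
      @T2Space (Equiv.Perm ℕ ⧸ finitaryS)
        (TopologicalSpace.coinduced
          (QuotientGroup.mk : Equiv.Perm ℕ → Equiv.Perm ℕ ⧸ finitaryS) tauPerm) := by
  let := tauPerm
  have := tauPerm_isTopologicalGroup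
  have := isClosed_finitaryS
  exact ⟨isClosed_finitaryS, inferInstance⟩
end

section
/- Let G = Sym(ℕ) carry the topology τ, fix k ∈ ℕ, and let φ : G → ℕ be the evaluation map φ(g) = g(k), where ℕ is equipped with the discrete uniformity. Then φ is left uniformly continuous and right proximally continuous (with respect to the left and right uniformities of (G, τ)). -/
section Coloring

variable {β : Type*} {c : ℕ → β}

theorem mem_uniformity_samuelNat_of_finite_range (hc : (Set.range c).Finite) :
    {p : ℕ × ℕ | c p.1 = c p.2} ∈ @uniformity ℕ samuelNat := by
  have := hc.to_subtype
  obtain ⟨n, ⟨e⟩⟩ := Finite.exists_equiv_fin (Set.range c)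
  let c' : ℕ → Fin n := e ∘ Set.rangeFactorization c
  have hc' : {p : ℕ × ℕ | c' p.1 = c' p.2} = {p | c p.1 = c p.2} := by
    ext p
    simp only [Set.mem_ofPred_eq, c', Function.comp_apply, e.apply_eq_iff_eq, Subtype.ext_iff,
      Set.rangeFactorization_coe]
  rw [← hc', samuelNat, iInf_uniformity]
  refine Filter.mem_iInf_of_mem n ?_
  rw [iInf_uniformity]
  refine Filter.mem_iInf_of_mem c' ?_
  rw [uniformity_comap, bot_uniformity]
  exact Filter.preimage_mem_comap (Filter.mem_principal_self _)

theorem setOf_forall_apply_eq_mem_nhds_tauPerm (hc : (Set.range c).Finite) :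
    {g : Equiv.Perm ℕ | ∀ x, c (g x) = c x} ∈ @nhds _ tauPerm 1 := by
  rw [tauPerm, @nhds_induced _ _ (@UniformFun.uniformSpace ℕ ℕ samuelNat).toTopologicalSpace]
  refine Filter.mem_comap.2 ⟨_, (@UniformFun.hasBasis_nhds ℕ ℕ samuelNat _).mem_of_mem
    (mem_uniformity_samuelNat_of_finite_range hc), fun g hg x => (hg x).symm⟩

end Coloring

theorem exists_int_coloring_abs_sub_lt {α : Type*} {φ : α → ℝ} {C : ℝ} (hC : ∀ y, |φ y| ≤ C)
    {ε : ℝ} (hε : 0 < ε) :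
    ∃ c : α → ℤ, (Set.range c).Finite ∧ ∀ x y, c x = c y → |φ x - φ y| < ε := by
  refine ⟨fun y => ⌊φ y / ε⌋, (Set.finite_Icc ⌊-C / ε⌋ ⌊C / ε⌋).subset ?_, fun x y hxy => ?_⟩
  · rintro _ ⟨y, rfl⟩
    obtain ⟨hlo, hhi⟩ := abs_le.1 (hC y)
    exact ⟨Int.floor_mono (div_le_div_of_nonneg_right hlo hε.le),
      Int.floor_mono (div_le_div_of_nonneg_right hhi hε.le)⟩
  · have h := Int.abs_sub_lt_one_of_floor_eq_floor hxy
    rwa [← sub_div, abs_div, abs_of_pos hε, div_lt_one hε] at h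

theorem leftUC_tauPerm_apply (k : ℕ) :
    @LeftUC (Equiv.Perm ℕ) _ tauPerm ℕ ⊥ (fun g => g k) := by
  intro V hV
  refine ⟨_, setOf_forall_apply_eq_mem_nhds_tauPerm (c := fun x => decide (x = k))
    (Set.range _).toFinite, fun g h hgh => ?_⟩
  have hfix : (g⁻¹ * h) k = k := of_decide_eq_true (by simpa using hgh k)
  rw [Equiv.Perm.mul_apply, Equiv.Perm.inv_eq_iff_eq] at hfix
  simpa only [hfix] using refl_mem_uniformity hV

theorem rightProxCont_tauPerm_apply (k : ℕ) :
    @RightProxCont (Equiv.Perm ℕ) _ tauPerm ℕ ⊥ (fun g => g k) := by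
  rintro φ - ⟨C, hC⟩ V hV
  obtain ⟨ε, hε, hball⟩ := Metric.mem_uniformity_dist.1 hV
  obtain ⟨c, hc, hcφ⟩ := exists_int_coloring_abs_sub_lt hC hε
  refine ⟨_, setOf_forall_apply_eq_mem_nhds_tauPerm hc, fun g h hgh => hball ?_⟩
  have hcolor : c (g k) = c (h k) := by simpa using hgh (h k)
  exact hcφ _ _ hcolor

/-- Proposition 3.1(1): the evaluation map `φ : g ↦ g k` from `(G, τ)` to `ℕ` with the
discrete uniformity is left uniformly continuous and right proximally continuous. -/
theorem stmt_10 (k : ℕ) :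
    @LeftUC (Equiv.Perm ℕ) _ tauPerm ℕ ⊥ (fun g => g k) ∧
      @RightProxCont (Equiv.Perm ℕ) _ tauPerm ℕ ⊥ (fun g => g k) :=
  ⟨leftUC_tauPerm_apply k, rightProxCont_tauPerm_apply k⟩
end

section
/- Let H be a subgroup of G = Sym(ℕ), F ⊆ ℕ a finite set, and τ₁ a group topology on H. For k ∈ F let φ_k : H → ℕ be given by φ_k(g) = g(k), ℕ discrete. If for each k ∈ F the map φ_k is right proximally continuous with respect to the right uniformity of (H, τ₁), then on the pointwise stabilizer H_(ℕ∖H·F) the topology τ is coarser than τ₁ (that is, the subspace topology induced by τ on H_(ℕ∖H·F) is contained in the one induced by τ₁). -/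
/-- The set `H·F = {h k : h ∈ H, k ∈ F}`. -/
def orbitSet (H : Subgroup (Equiv.Perm ℕ)) (F : Set ℕ) : Set ℕ :=
  {x | ∃ h ∈ H, ∃ k ∈ F, h k = x}

/-- The pointwise stabilizer `H_(L)` of `L ⊆ ℕ` in the subgroup `H`. -/
def pstab (H : Subgroup (Equiv.Perm ℕ)) (L : Set ℕ) : Set ↥H :=
  {g | ∀ x ∈ L, (g : Equiv.Perm ℕ) x = x}

/-!
A finite partition of `ℕ` is a colouring `c : ℕ → Fin n`, and `c` is a bounded uniformly
continuous real function on discrete `ℕ`. Right proximal continuity of `g ↦ g k` therefore gives a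
`τ₁`-neighbourhood `U` of `1` with `c (u g k) = c (g k)` for all `u ∈ U`, `g ∈ H`, `k ∈ F`
(values of `c` differing by less than `1` coincide). Replacing `g` by `g h` spreads this from `F`
to `H·F`, while the stabilizer of `ℕ ∖ H·F` fixes every other point. Hence `τ₁`-close elements
of the stabilizer lie in the same `τ`-neighbourhood `H_π`.
-/

open Filter Topology Uniformity

theorem RightProxCont.eventually_comp_mul_eq {G Y : Type*} [Group G] {t : TopologicalSpace G}
    {f : G → Y} (hf : @RightProxCont G _ t Y ⊥ f) {n : ℕ} (c : Y → Fin n) :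
    ∀ᶠ u in @nhds G t 1, ∀ g, c (f (u * g)) = c (f g) := by
  let _ : UniformSpace Y := ⊥
  have hbdd : ∃ C, ∀ y, |((c y : ℕ) : ℝ)| ≤ C :=
    ⟨n, fun y => by rw [Nat.abs_cast]; exact_mod_cast (c y).isLt.le⟩
  obtain ⟨U, hU, hUf⟩ := hf _ (DiscreteUniformity.uniformContinuous Y _) hbdd _
    (Metric.dist_mem_uniformity one_pos)
  filter_upwards [hU] with u hu g
  have hdist : dist (c (f (u * g)) : ℕ) (c (f g)) < 1 := by
    rw [← Nat.dist_cast_real]; exact hUf _ _ (by simpa using hu)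
  by_contra hne
  exact (Nat.pairwise_one_le_dist (Fin.val_injective.ne hne)).not_gt hdist

theorem UniformFun.continuous_comap_bot_of_eventually {X α β γ : Type*} [TopologicalSpace X]
    (c : β → γ) {f : X → α → β}
    (hf : ∀ x₀, ∀ᶠ x in 𝓝 x₀, ∀ a, c (f x a) = c (f x₀ a)) :
    Continuous[_, (@UniformFun.uniformSpace α β (.comap c ⊥)).toTopologicalSpace]
      (fun x => UniformFun.ofFun (f x)) := by
  let _ : UniformSpace β := .comap c ⊥
  have hbasis : (𝓤 β).HasBasis (fun _ : Unit => True) fun _ => {p | c p.1 = c p.2} := by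
    rw [uniformity_comap, bot_uniformity, comap_principal]
    exact hasBasis_principal _
  refine continuous_iff_continuousAt.2 fun x₀ => ?_
  refine ((UniformFun.hasBasis_nhds_of_basis α β _ hbasis).tendsto_right_iff).2 fun _ _ => ?_
  filter_upwards [hf x₀] with x hx a using (hx a).symm

theorem UniformFun.continuous_samuelNat_of_eventually {X α : Type*} [TopologicalSpace X]
    {f : X → α → ℕ} (hf : ∀ n (c : ℕ → Fin n) x₀, ∀ᶠ x in 𝓝 x₀, ∀ a, c (f x a) = c (f x₀ a)) :
    Continuous[_, (@UniformFun.uniformSpace α ℕ samuelNat).toTopologicalSpace]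
      (fun x => UniformFun.ofFun (f x)) := by
  rw [samuelNat, UniformFun.iInf_eq, UniformSpace.toTopologicalSpace_iInf]
  refine continuous_iInf_rng.2 fun n => ?_
  rw [UniformFun.iInf_eq, UniformSpace.toTopologicalSpace_iInf]
  exact continuous_iInf_rng.2 fun c => UniformFun.continuous_comap_bot_of_eventually c (hf n c)

theorem eventually_mul_apply_orbitSet {H : Subgroup (Equiv.Perm ℕ)} {F : Set ℕ} (hF : F.Finite)
    {t : TopologicalSpace H}
    (hprox : ∀ k ∈ F, @RightProxCont H _ t ℕ ⊥ (fun g => (g : Equiv.Perm ℕ) k))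
    {n : ℕ} (c : ℕ → Fin n) :
    ∀ᶠ u in @nhds H t 1, ∀ g : H, ∀ x ∈ orbitSet H F,
      c (((u * g : H) : Equiv.Perm ℕ) x) = c ((g : Equiv.Perm ℕ) x) := by
  filter_upwards [hF.eventually_all.2 fun k hk => (hprox k hk).eventually_comp_mul_eq c]
    with u hu g
  rintro _ ⟨h, hh, k, hk, rfl⟩
  simpa [mul_assoc] using hu k hk (g * ⟨h, hh⟩)

theorem continuous_ofFun_pstab_compl_orbitSet {H : Subgroup (Equiv.Perm ℕ)} {F : Set ℕ}
    (hF : F.Finite) [TopologicalSpace H] [ContinuousMul H]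
    (hprox : ∀ k ∈ F, @RightProxCont H _ ‹_› ℕ ⊥ (fun g => (g : Equiv.Perm ℕ) k)) :
    Continuous[_, (@UniformFun.uniformSpace ℕ ℕ samuelNat).toTopologicalSpace]
      (fun s : pstab H {x | x ∉ orbitSet H F} => UniformFun.ofFun ((s : H) : Equiv.Perm ℕ)) := by
  refine UniformFun.continuous_samuelNat_of_eventually fun n c s₀ => ?_
  have hright : Tendsto (fun s : pstab H _ => (s : H) * (s₀ : H)⁻¹) (𝓝 s₀) (𝓝 1) := by
    simpa [Function.comp_def] using
      ((continuous_mul_const (s₀ : H)⁻¹).comp continuous_subtype_val).tendsto s₀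
  filter_upwards [hright.eventually (eventually_mul_apply_orbitSet hF hprox c)] with s hs x
  by_cases hx : x ∈ orbitSet H F
  · simpa only [inv_mul_cancel_right] using hs s₀ x hx
  · rw [s.2 x hx, s₀.2 x hx]

/-- Proposition 3.2(1): if `τ₁` is a group topology on a subgroup `H ≤ G = Sym(ℕ)` and, for
each `k` in the finite set `F`, the evaluation map `φ_k : g ↦ g k` (into discrete `ℕ`) is
right proximally continuous on `(H, τ₁)`, then on the pointwise stabilizer `H_(ℕ \ H·F)` the
topology `τ` is coarser than `τ₁`: every `τ`-open subset of this stabilizer is `τ₁`-open. -/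
theorem stmt_13 (H : Subgroup (Equiv.Perm ℕ)) (F : Set ℕ) (hF : F.Finite)
    (t1 : TopologicalSpace ↥H) (ht1 : @IsTopologicalGroup ↥H t1 _)
    (hprox : ∀ k ∈ F, @RightProxCont ↥H _ t1 ℕ ⊥ (fun g => (g : Equiv.Perm ℕ) k)) :
    ∀ U : Set ↥(pstab H {x | x ∉ orbitSet H F}),
      @IsOpen _ (TopologicalSpace.induced Subtype.val
        (TopologicalSpace.induced Subtype.val tauPerm)) U →
      @IsOpen _ (TopologicalSpace.induced Subtype.val t1) U := by
  intro U hU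
  rw [tauPerm, induced_compose, induced_compose] at hU
  exact continuous_iff_le_induced.1 (continuous_ofFun_pstab_compl_orbitSet hF hprox) U hU
end

section
/- Let H be a subgroup of G = Sym(ℕ), F ⊆ ℕ a finite set, and τ₁ a group topology on H. For k ∈ F let φ_k : H → ℕ be given by φ_k(g) = g(k), ℕ discrete. If for each k ∈ F the map φ_k is right uniformly continuous with respect to the right uniformity of (H, τ₁), then τ₁ is discrete on the pointwise stabilizer H_(ℕ∖H·F) (i.e., the subspace topology induced by τ₁ on H_(ℕ∖H·F) is the discrete topology). -/
/-!
Right uniform continuity of `g ↦ g k` into discrete `ℕ` gives a neighbourhood `U` of `1` with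
`(s g) k = g k` whenever `s = (s g) g⁻¹ ∈ U`, i.e. every `s ∈ U` fixes the orbit `H·k` pointwise.
Intersecting over the finite set `F`, a neighbourhood of `1` fixes `H·F` pointwise, so it meets
`H_(ℕ ∖ H·F)` only in `1`; a subgroup with an isolated identity is discrete.
-/

open Topology

theorem RightUC.eventually_smul_smul_eq {G X : Type*} [Group G] [MulAction G X]
    {t : TopologicalSpace G} {x : X} (h : @RightUC G _ t X ⊥ (fun g => g • x)) :
    ∀ᶠ s in @nhds G t 1, ∀ g : G, s • g • x = g • x := by
  obtain ⟨U, hU, hUx⟩ := h SetRel.id (by simp [bot_uniformity])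
  filter_upwards [hU] with s hs g
  simpa [mul_smul] using hUx (s * g) g (by simpa using hs)

theorem induced_val_eq_bot_of_eventually_eq_one {G : Type*} [Group G] [TopologicalSpace G]
    [ContinuousMul G] {S : Set G} (hS : ∀ a ∈ S, ∀ b ∈ S, b * a⁻¹ ∈ S)
    (h : ∀ᶠ g in 𝓝 1, g ∈ S → g = 1) :
    TopologicalSpace.induced (Subtype.val : S → G) ‹_› = ⊥ := by
  have : DiscreteTopology S := by
    refine discreteTopology_iff_singleton_mem_nhds.2 fun a => ?_
    have ha : Filter.Tendsto (· * (a : G)⁻¹) (𝓝 (a : G)) (𝓝 1) := by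
      simpa using (continuous_mul_const (a : G)⁻¹).tendsto (a : G)
    refine (mem_nhds_subtype S a _).2 ⟨_, ha.eventually h, fun b hb => ?_⟩
    exact Subtype.ext (mul_inv_eq_one.1 (hb (hS a a.2 b b.2)))
  exact DiscreteTopology.eq_bot

theorem mul_inv_mem_pstab {H : Subgroup (Equiv.Perm ℕ)} {L : Set ℕ} {a b : H}
    (ha : a ∈ pstab H L) (hb : b ∈ pstab H L) : b * a⁻¹ ∈ pstab H L := by
  intro x hx
  have hax : (a : Equiv.Perm ℕ)⁻¹ x = x := Equiv.Perm.inv_eq_iff_eq.2 (ha x hx).symm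
  simp [Equiv.Perm.mul_apply, hax, hb x hx]

theorem eq_one_of_mem_pstab_compl_orbitSet {H : Subgroup (Equiv.Perm ℕ)} {F : Set ℕ} {s : H}
    (hfix : ∀ k ∈ F, ∀ g : H, s • g • k = g • k)
    (hs : s ∈ pstab H {x | x ∉ orbitSet H F}) : s = 1 := by
  ext x
  by_cases hx : x ∈ orbitSet H F
  · obtain ⟨g, hg, k, hk, rfl⟩ := hx
    exact hfix k hk ⟨g, hg⟩
  · exact hs x hx

/-- Proposition 3.2(2): if `τ₁` is a group topology on a subgroup `H ≤ G = Sym(ℕ)` and, for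
each `k` in the finite set `F`, the evaluation map `φ_k : g ↦ g k` (into discrete `ℕ`) is
right uniformly continuous on `(H, τ₁)`, then `τ₁` is discrete on the pointwise stabilizer
`H_(ℕ \ H·F)`. -/
theorem stmt_14 (H : Subgroup (Equiv.Perm ℕ)) (F : Set ℕ) (hF : F.Finite)
    (t1 : TopologicalSpace ↥H) (ht1 : @IsTopologicalGroup ↥H t1 _)
    (huc : ∀ k ∈ F, @RightUC ↥H _ t1 ℕ ⊥ (fun g => (g : Equiv.Perm ℕ) k)) :
    TopologicalSpace.induced
      (Subtype.val : ↥(pstab H {x | x ∉ orbitSet H F}) → ↥H) t1 = ⊥ := by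
  let := t1
  have hfix : ∀ᶠ s in 𝓝 (1 : H), ∀ k ∈ F, ∀ g : H, s • g • k = g • k :=
    (Filter.eventually_all_finite hF).2 fun k hk => (huc k hk).eventually_smul_smul_eq
  refine induced_val_eq_bot_of_eventually_eq_one (fun a ha b hb => mul_inv_mem_pstab ha hb) ?_
  filter_upwards [hfix] with s hs using eq_one_of_mem_pstab_compl_orbitSet hs
end

section
/- Let H be a subgroup of G = Sym(ℕ), F ⊆ ℕ a finite set, and τ₁ a group topology on H which is finer than the restriction to H of the topology τ₀ of pointwise convergence on G (ℕ discrete). If (H, τ₁) is strongly FSIN, then τ₁ is discrete on the pointwise stabilizer H_(ℕ∖H·F) (i.e., the subspace topology induced by τ₁ on H_(ℕ∖H·F) is the discrete topology). -/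
/-- The natural Polish topology `τ₀` on `Sym(ℕ)`: the topology of pointwise convergence,
`ℕ` being discrete. -/
def tauZero : TopologicalSpace (Equiv.Perm ℕ) :=
  TopologicalSpace.induced (fun g => (⇑g : ℕ → ℕ))
    (@Pi.topologicalSpace ℕ (fun _ => ℕ) (fun _ => ⊥))

/-- A topological group is strongly FSIN if every (not necessarily bounded) left uniformly
continuous real-valued function on it is right uniformly continuous. -/
def StronglyFSIN {G : Type*} [Group G] (t : TopologicalSpace G) : Prop :=
  ∀ f : G → ℝ, LeftUC t f → RightUC t f

/-!
A strongly FSIN group turns every left uniformly locally constant map into a countable set into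
a right uniformly locally constant one: encode the values as natural numbers, viewed as reals.
Applied to the restriction map `h ↦ h|_F`, which is left uniformly locally constant because
`τ₁` refines `τ₀`, this yields a neighbourhood `V` of `1` with `(u h)|_F = h|_F` for all
`u ∈ V` and `h ∈ H`, i.e. every `u ∈ V` fixes `H·F` pointwise. An element of `V` which also
fixes `ℕ \ H·F` is the identity, so `V` separates the points of `H_(ℕ \ H·F)`.
-/

open Topology

theorem discreteTopology_of_inv_mul_mem_nhds_one {G : Type*} [Group G] [TopologicalSpace G]
    [ContinuousMul G] {S : Set G} {U : Set G} (hU : U ∈ 𝓝 1)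
    (hS : ∀ p ∈ S, ∀ q ∈ S, p⁻¹ * q ∈ U → p = q) : DiscreteTopology S := by
  refine discreteTopology_iff_singleton_mem_nhds.mpr fun p => ?_
  refine (mem_nhds_induced Subtype.val p _).mpr ⟨(fun x => (p : G)⁻¹ * x) ⁻¹' U, ?_, ?_⟩
  · exact (continuous_const_mul _).continuousAt.preimage_mem_nhds (by rwa [inv_mul_cancel])
  · exact fun q hq => Subtype.ext (hS p p.2 q q.2 hq).symm

theorem StronglyFSIN.exists_nhds_one_of_inv_mul_mem {G : Type*} [Group G] {t : TopologicalSpace G}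
    (hG : StronglyFSIN t) {X : Type*} [Countable X] (φ : G → X) {U : Set G}
    (hU : U ∈ @nhds G t 1) (hφ : ∀ g h, g⁻¹ * h ∈ U → φ g = φ h) :
    ∃ V ∈ @nhds G t 1, ∀ g h, g * h⁻¹ ∈ V → φ g = φ h := by
  obtain ⟨enc, henc⟩ := Countable.exists_injective_nat X
  have hleft : LeftUC t fun g => (enc (φ g) : ℝ) := fun W hW =>
    ⟨U, hU, fun g h hgh => by simpa only [hφ g h hgh] using refl_mem_uniformity hW⟩
  obtain ⟨V, hV, hVφ⟩ := hG _ hleft _ (Metric.dist_mem_uniformity one_pos)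
  refine ⟨V, hV, fun g h hgh => henc ?_⟩
  by_contra hne
  have hdist : dist (enc (φ g) : ℝ) (enc (φ h)) < 1 := hVφ g h hgh
  rw [Nat.dist_cast_real] at hdist
  exact (Nat.pairwise_one_le_dist hne).not_gt hdist

theorem isOpen_tauZero_setOf_forall_apply_eq {F : Set ℕ} (hF : F.Finite) :
    IsOpen[tauZero] {g : Equiv.Perm ℕ | ∀ x ∈ F, g x = x} := by
  let : TopologicalSpace ℕ := ⊥
  refine isOpen_induced_iff.mpr
    ⟨F.pi fun x => {x}, isOpen_set_pi hF fun _ _ => isOpen_discrete _, ?_⟩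
  ext g
  simp [Set.mem_pi]

/-- Proposition 3.2(3): if `τ₁` is a group topology on a subgroup `H ≤ G = Sym(ℕ)` finer than
the restriction of the pointwise convergence topology `τ₀`, and `(H, τ₁)` is strongly FSIN,
then `τ₁` is discrete on the pointwise stabilizer `H_(ℕ \ H·F)`, for any finite `F ⊆ ℕ`. -/
theorem stmt_15 (H : Subgroup (Equiv.Perm ℕ)) (F : Set ℕ) (hF : F.Finite)
    (t1 : TopologicalSpace ↥H) (ht1 : @IsTopologicalGroup ↥H t1 _)
    (hfiner : t1 ≤ TopologicalSpace.induced Subtype.val tauZero)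
    (hfsin : StronglyFSIN t1) :
    TopologicalSpace.induced
      (Subtype.val : ↥(pstab H {x | x ∉ orbitSet H F}) → ↥H) t1 = ⊥ := by
  let := t1
  have : Finite F := hF.to_subtype
  have hfixF : {h : H | ∀ x ∈ F, (h : Equiv.Perm ℕ) x = x} ∈ 𝓝 (1 : H) :=
    (hfiner _ (isOpen_induced (t := tauZero) (isOpen_tauZero_setOf_forall_apply_eq hF))).mem_nhds
      fun _ _ => rfl
  obtain ⟨V, hV, hVrestr⟩ := hfsin.exists_nhds_one_of_inv_mul_mem
    (fun (h : H) (x : F) => (h : Equiv.Perm ℕ) x) hfixF fun g h hgh => funext fun x => by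
      have hx : (g : Equiv.Perm ℕ)⁻¹ ((h : Equiv.Perm ℕ) x) = x := hgh x x.2
      exact (Equiv.Perm.inv_eq_iff_eq.mp hx).symm
  have hVfix : ∀ u ∈ V, ∀ x ∈ orbitSet H F, (u : Equiv.Perm ℕ) x = x := by
    rintro u hu _ ⟨h, hh, k, hk, rfl⟩
    simpa using congrFun (hVrestr (u * ⟨h, hh⟩) ⟨h, hh⟩ (by simpa using hu)) ⟨k, hk⟩
  refine (discreteTopology_of_inv_mul_mem_nhds_one hV fun p hp q hq hpq => ?_).eq_bot
  refine inv_mul_eq_one.mp (Subtype.ext (Equiv.ext fun x => ?_))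
  by_cases hx : x ∈ orbitSet H F
  · exact hVfix _ hpq x hx
  · simp [Equiv.symm_apply_eq, hp x hx, hq x hx]
end

section
/- Let H be a subgroup of G = Sym(ℕ), m ∈ ℕ, and L ⊆ ℕ a set such that |L ∩ K| ≤ m for every orbit K of the action of H on ℕ. Then the pointwise stabilizer H_(L) is open in H for the topology induced by τ. -/
/-!
Colour each point of `L` through an injection of `L ∩ K` into `m` colours, `K` its `H`-orbit
(chosen once per orbit), and every point outside `L` by one extra colour. An element of `H` moves
points only inside their orbits, so it fixes `L` pointwise iff it preserves this finite colouring;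
and the permutations preserving a colouring with finitely many colours form a `τ`-open set,
because the colouring's fibres are a finite partition of `ℕ`.
-/

open Cardinal MulAction Topology

lemma exists_injOn_option_fin_of_mk_le {α : Type*} {s : Set α} {m : ℕ} (hs : #s ≤ m) :
    ∃ f : α → Option (Fin m), s.InjOn f ∧ ∀ x, f x = none ↔ x ∉ s := by
  classical
  obtain ⟨e⟩ : Nonempty (s ↪ Fin m) := by
    rwa [← Cardinal.lift_mk_le', Cardinal.mk_fin, Cardinal.lift_natCast, Cardinal.lift_le_nat_iff]
  refine ⟨fun x => if h : x ∈ s then some (e ⟨x, h⟩) else none, fun a ha b hb hab => ?_,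
    fun x => by by_cases h : x ∈ s <;> simp [h]⟩
  simpa [ha, hb] using hab

lemma exists_coloring_fixing_iff {G α : Type*} [Group G] [MulAction G α] {L : Set α} {m : ℕ}
    (hL : ∀ x : α, #↥(L ∩ orbit G x) ≤ m) :
    ∃ c : α → Option (Fin m), ∀ g : G, (∀ x ∈ L, g • x = x) ↔ ∀ x, c (g • x) = c x := by
  have hchoice : ∀ q : orbitRel.Quotient G α, ∃ f : α → Option (Fin m),
      (L ∩ q.orbit).InjOn f ∧ ∀ x, f x = none ↔ x ∉ L ∩ q.orbit := fun q =>
    Quotient.inductionOn' q fun x => by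
      rw [orbitRel.Quotient.orbit_mk]
      exact exists_injOn_option_fin_of_mk_le (hL x)
  choose F hinj hnone using hchoice
  have hmem (x : α) : x ∈ orbitRel.Quotient.orbit (Quotient.mk'' x : orbitRel.Quotient G α) := by
    rw [orbitRel.Quotient.orbit_mk]; exact mem_orbit_self x
  have hmk (g : G) (x : α) :
      (Quotient.mk'' (g • x) : orbitRel.Quotient G α) = Quotient.mk'' x :=
    Quotient.sound' (orbitRel_apply.mpr (mem_orbit x g))
  refine ⟨fun x => F (Quotient.mk'' x) x, fun g => ⟨fun hfix x => ?_, fun hc x hx => ?_⟩⟩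
  · simp only [hmk]
    by_cases hx : x ∈ L
    · rw [hfix x hx]
    · have hgx : g • x ∉ L := fun hgx =>
        hx (smul_left_cancel g (hfix _ hgx) ▸ hgx)
      rw [(hnone _ _).mpr fun h => hgx h.1, (hnone _ _).mpr fun h => hx h.1]
  · have hcx := hc x
    simp only [hmk] at hcx
    have hx' := And.intro hx (hmem x)
    have hgx : g • x ∈ L ∩ orbitRel.Quotient.orbit (Quotient.mk'' x : orbitRel.Quotient G α) := by
      by_contra h
      rw [← hnone, hcx, hnone] at h
      exact h hx'
    exact hinj _ hgx hx' hcx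

lemma setOf_comp_eq_mem_uniformity_samuelNat {κ : Type*} [Finite κ] (c : ℕ → κ) :
    {p : ℕ × ℕ | c p.1 = c p.2} ∈ @uniformity ℕ samuelNat := by
  obtain ⟨n, ⟨e⟩⟩ := Finite.exists_equiv_fin κ
  rw [samuelNat, iInf_uniformity]
  refine Filter.mem_iInf_of_mem n ?_
  rw [iInf_uniformity]
  refine Filter.mem_iInf_of_mem (e ∘ c) ?_
  rw [@uniformity_comap ℕ (Fin n) ⊥, @bot_uniformity (Fin n)]
  exact ⟨SetRel.id, Filter.mem_principal_self _, fun p hp => e.injective hp⟩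

lemma isOpen_setOf_forall_comp_eq {κ : Type*} [Finite κ] (c : ℕ → κ) :
    IsOpen[tauPerm] {g : Equiv.Perm ℕ | ∀ x, c (g x) = c x} := by
  let _ : UniformSpace ℕ := samuelNat
  refine isOpen_induced (s := {F : UniformFun ℕ ℕ | ∀ x, c (UniformFun.toFun F x) = c x}) ?_
  refine isOpen_iff_mem_nhds.mpr fun F hF => UniformSpace.mem_nhds_iff.mpr ?_
  refine ⟨UniformFun.gen ℕ ℕ {p | c p.1 = c p.2},
    (UniformFun.hasBasis_uniformity ℕ ℕ).mem_of_mem (setOf_comp_eq_mem_uniformity_samuelNat c),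
    fun G hG x => ?_⟩
  exact (hG x : c (UniformFun.toFun F x) = c (UniformFun.toFun G x)).symm.trans (hF x)

/-- Lemma 3.3: if `H ≤ G = Sym(ℕ)` and `L ⊆ ℕ` meets every orbit of `H` in at most `m`
points, then the pointwise stabilizer `H_(L)` is `τ`-open in `H`. -/
theorem stmt_16 (H : Subgroup (Equiv.Perm ℕ)) (m : ℕ) (L : Set ℕ)
    (hL : ∀ x : ℕ, Cardinal.mk ↥(L ∩ MulAction.orbit ↥H x) ≤ (m : Cardinal)) :
    @IsOpen ↥H (TopologicalSpace.induced Subtype.val tauPerm) (pstab H L) := by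
  obtain ⟨c, hc⟩ := exists_coloring_fixing_iff hL
  have hpstab : pstab H L = Subtype.val ⁻¹' {g : Equiv.Perm ℕ | ∀ x, c (g x) = c x} :=
    Set.ext fun g => hc g
  rw [hpstab]
  exact isOpen_induced (t := tauPerm) (isOpen_setOf_forall_comp_eq c)
end

section
/- Let H be a subgroup of G = Sym(ℕ) such that all but finitely many orbits of H on ℕ are finite and uniformly bounded (i.e., there exist m ∈ ℕ and finitely many orbits outside of which every orbit has at most m elements). Then the discrete topology is the only group topology on H that is both proximally fine (with respect to its right uniformity) and finer than the topology induced on H by τ. -/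
universe v

/-! Proximal fineness upgrades to right uniform continuity the orbit maps `g ↦ g • x` into
discrete `ℕ`, which are proximally continuous since a bounded real function on `ℕ` varies by
less than `ε` on the pieces of some finite partition of `ℕ`. Hence the pointwise stabiliser of
each of the finitely many large orbits is a neighbourhood of `1`. Colouring every point by its
rank in its orbit gives a finite partition whose stabiliser fixes every point of a small orbit.
These neighbourhoods intersect in `{1}`, so the group topology is discrete. -/

open Cardinal MulAction

theorem exists_coloring_dist_lt {X : Type*} (ψ : X → ℝ) (hψ : Bornology.IsBounded (Set.range ψ))
    {ε : ℝ} (hε : 0 < ε) : ∃ (n : ℕ) (c : X → Fin n), ∀ a b, c a = c b → dist (ψ a) (ψ b) < ε := by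
  obtain ⟨t, -, ht, hcover⟩ :=
    Metric.finite_approx_of_totallyBounded
      (hψ.isCompact_closure.totallyBounded.subset subset_closure) (ε / 2) (half_pos hε)
  have hnear : ∀ a, ∃ y : t, dist (ψ a) y < ε / 2 := fun a => by
    obtain ⟨y, hy, hay⟩ := Set.mem_iUnion₂.1 (hcover (Set.mem_range_self a))
    exact ⟨⟨y, hy⟩, hay⟩
  choose centre hcentre using hnear
  have := ht.to_subtype
  refine ⟨Nat.card t, Finite.equivFin t ∘ centre, fun a b hab => ?_⟩
  replace hab : centre a = centre b := (Finite.equivFin t).injective hab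
  calc dist (ψ a) (ψ b) ≤ dist (ψ a) (centre a) + dist (ψ b) (centre a) := dist_triangle_right _ _ _
    _ < ε / 2 + ε / 2 := add_lt_add (hcentre a) (hab ▸ hcentre b)
    _ = ε := add_halves ε

theorem Nat.count_mem_lt_of_mk_le {s : Set ℕ} [DecidablePred (· ∈ s)] {m : ℕ} (hs : #s ≤ m)
    {n : ℕ} (hn : n ∈ s) : Nat.count (· ∈ s) n < m := by
  have hfin : s.Finite := lt_aleph0_iff_set_finite.1 (hs.trans_lt natCast_lt_aleph0)
  refine (Nat.count_lt_card (p := (· ∈ s)) hfin hn).trans_le ?_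
  rw [← Set.ncard_eq_toFinset_card s hfin]
  exact_mod_cast (Set.cast_ncard hfin).trans_le hs

theorem exists_coloring_forall_smul_eq_of_mk_orbit_le (G : Type*) [Group G] [MulAction G ℕ]
    (m : ℕ) : ∃ c : ℕ → Fin (m + 1), ∀ g : G, (∀ y : ℕ, c (g • y) = c y) →
      ∀ y : ℕ, #(orbit G y) ≤ m → g • y = y := by
  classical
  -- colour a point by its rank in its orbit, which is injective on each orbit and `< m` on small ones
  refine ⟨fun a => ⟨min (Nat.count (· ∈ orbit G a) a) m, by omega⟩, fun g hg y hy => ?_⟩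
  have hrank := congrArg Fin.val (hg y)
  simp only [orbit_smul] at hrank
  rw [min_eq_left (Nat.count_mem_lt_of_mk_le hy (mem_orbit y g)).le,
    min_eq_left (Nat.count_mem_lt_of_mk_le hy (mem_orbit_self y)).le] at hrank
  exact Nat.count_injective (mem_orbit y g) (mem_orbit_self y) hrank

/-- The neighbourhood `H_π` of `1` in the paper, for `π` the partition of `ℕ` into the fibres of `c`. -/
def partitionStabilizer {n : ℕ} (c : ℕ → Fin n) : Set (Equiv.Perm ℕ) :=
  {g | c ∘ ⇑g = c}

theorem partitionStabilizer_mem_nhds_one {n : ℕ} (c : ℕ → Fin n) :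
    partitionStabilizer c ∈ @nhds _ tauPerm 1 := by
  let _ : UniformSpace ℕ := samuelNat
  have hfibre : {p : ℕ × ℕ | c p.1 = c p.2} ∈ uniformity ℕ := by
    have hc : {p : ℕ × ℕ | c p.1 = c p.2} ∈ @uniformity ℕ (UniformSpace.comap c ⊥) := by
      rw [uniformity_comap, bot_uniformity]
      exact Filter.preimage_mem_comap (Filter.mem_principal_self _)
    exact (iInf_le_of_le n (iInf_le _ c) : samuelNat ≤ UniformSpace.comap c ⊥) hc
  have hunif : {φ : UniformFun ℕ ℕ | ∀ y, c (UniformFun.toFun φ y) = c y} ∈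
      nhds (UniformFun.ofFun ⇑(1 : Equiv.Perm ℕ)) := by
    exact UniformSpace.mem_nhds_iff.2 ⟨_, (UniformFun.hasBasis_uniformity ℕ ℕ).mem_of_mem hfibre,
      fun φ hφ y => (hφ y).symm⟩
  rw [tauPerm, nhds_induced]
  exact Filter.mem_comap.2 ⟨_, hunif, fun g hg => funext hg⟩

section Subgroup

variable {H : Subgroup (Equiv.Perm ℕ)} {t : TopologicalSpace H}

theorem preimage_partitionStabilizer_mem_nhds_one
    (hfiner : t ≤ TopologicalSpace.induced Subtype.val tauPerm) {n : ℕ} (c : ℕ → Fin n) :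
    Subtype.val ⁻¹' partitionStabilizer c ∈ @nhds H t 1 := by
  let _ : TopologicalSpace (Equiv.Perm ℕ) := tauPerm
  refine nhds_mono hfiner ?_
  rw [nhds_induced]
  exact Filter.preimage_mem_comap (partitionStabilizer_mem_nhds_one c)

theorem rightProxCont_comp_smul (hfiner : t ≤ TopologicalSpace.induced Subtype.val tauPerm)
    {Y : Type*} [UniformSpace Y] (e : ℕ → Y) (x : ℕ) : RightProxCont t fun g : H => e (g • x) := by
  rintro φ - ⟨C, hC⟩ V hV
  obtain ⟨ε, hε, hball⟩ := Metric.mem_uniformity_dist.1 hV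
  have hbdd : Bornology.IsBounded (Set.range (φ ∘ e)) :=
    isBounded_iff_forall_norm_le.2 ⟨C, by rintro _ ⟨y, rfl⟩; exact hC (e y)⟩
  obtain ⟨n, c, hc⟩ := exists_coloring_dist_lt (φ ∘ e) hbdd hε
  refine ⟨_, preimage_partitionStabilizer_mem_nhds_one hfiner c, fun g h hgh => hball (hc _ _ ?_)⟩
  have hgx : (g * h⁻¹) • h • x = g • x := by rw [smul_smul, inv_mul_cancel_right]
  rw [← hgx]
  exact congrFun hgh (h • x)

theorem setOf_forall_mem_orbit_smul_eq_mem_nhds_one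
    (hfiner : t ≤ TopologicalSpace.induced Subtype.val tauPerm) (hpf : ProxFineGroup.{v} t)
    (x : ℕ) : {u : H | ∀ y ∈ orbit H x, u • y = y} ∈ @nhds H t 1 := by
  let _ : UniformSpace (ULift.{v} ℕ) := ⊥
  obtain ⟨U, hU, hUfix⟩ := hpf _ _ (rightProxCont_comp_smul hfiner ULift.up x) SetRel.id
    (by rw [bot_uniformity]; exact Filter.mem_principal_self _)
  refine Filter.mem_of_superset hU ?_
  rintro u hu _ ⟨h, rfl⟩
  have := ULift.up.inj (hUfix (u * h) h (by simpa using hu))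
  rwa [mul_smul] at this

end Subgroup

/-- Corollary 3.4: let `H ≤ G = Sym(ℕ)` be a subgroup all of whose orbits, apart from the
orbits of the points of a finite set `F`, have at most `m` elements.  Then the discrete
topology is the only group topology on `H` which is proximally fine and finer than the
topology induced by `τ`. -/
theorem stmt_17 (H : Subgroup (Equiv.Perm ℕ)) (m : ℕ) (F : Finset ℕ)
    (horb : ∀ x : ℕ, (∀ k ∈ F, x ∉ MulAction.orbit ↥H k) →
      Cardinal.mk ↥(MulAction.orbit ↥H x) ≤ (m : Cardinal))
    (t1 : TopologicalSpace ↥H) (ht1 : @IsTopologicalGroup ↥H t1 _)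
    (hfiner : t1 ≤ TopologicalSpace.induced Subtype.val tauPerm)
    (hpf : ProxFineGroup t1) :
    t1 = ⊥ := by
  obtain ⟨c, hc⟩ := exists_coloring_forall_smul_eq_of_mk_orbit_le H m
  set N := (⋂ k ∈ F, {u : H | ∀ y ∈ orbit H k, u • y = y}) ∩
    Subtype.val ⁻¹' partitionStabilizer c
  have hN : N ∈ @nhds H t1 1 :=
    Filter.inter_mem ((Filter.biInter_finset_mem F).2 fun k _ =>
      setOf_forall_mem_orbit_smul_eq_mem_nhds_one hfiner hpf k)
      (preimage_partitionStabilizer_mem_nhds_one hfiner c)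
  have hN_trivial : N ⊆ {1} := by
    rintro u ⟨hF, hc'⟩
    ext y
    by_cases hy : ∀ k ∈ F, y ∉ orbit H k
    · exact hc u (congrFun hc') y (horb y hy)
    · simp only [not_forall, not_not] at hy
      obtain ⟨k, hk, hyk⟩ := hy
      exact Set.mem_iInter₂.1 hF k hk y hyk
  let _ := t1
  have : DiscreteTopology H := discreteTopology_of_isOpen_singleton_one <| by
    simpa [isOpen_iff_mem_nhds] using Filter.mem_of_superset hN hN_trivial
  exact DiscreteTopology.eq_bot
end
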